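/- arXiv:2502.00424 — 12 statements merged into one kernel-verified Lean document; each statement's English description precedes it below -/
import Mathlib

section
/- Let (X,d) be a complete separable metric space without isolated points and f: X → X continuous. If there exists a dense uniformly Li–Yorke scrambled set in X, then for every k ≥ 2 both Prox_k(f) and D_k(f) are dense in X^k. -/
open Filter Topology Metric

lemma diff_finset_nonempty' {X : Type*} [MetricSpace X] (hX : ∀ x : X, Filter.NeBot (𝓝[≠] x)) :
    ∀ (F : Finset X) (U : Set X), IsOpen U → U.Nonempty → (U \ ↑F).Nonempty := by
  classical
  intro F
  induction F using Finset.induction_on with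
  | empty => intro U hU hne; simpa
  | @insert a F ha ih =>
    intro U hU hne
    have h1 : (U \ {a}).Nonempty := by
      by_cases haU : a ∈ U
      · have hU' : U ∈ 𝓝[≠] a := nhdsWithin_le_nhds (hU.mem_nhds haU)
        have := (hX a).nonempty_of_mem (Filter.inter_mem hU' self_mem_nhdsWithin)
        obtain ⟨x, hx1, hx2⟩ := this
        exact ⟨x, hx1, hx2⟩
      · obtain ⟨x, hx⟩ := hne
        exact ⟨x, hx, fun h => haU (by simpa [Set.mem_singleton_iff.1 h] using hx)⟩
    have h2 : IsOpen (U \ {a}) := hU.sdiff isClosed_singleton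
    have := ih (U \ {a}) h2 h1
    rw [Set.diff_diff] at this
    simpa using this

lemma exists_tuple' {X : Type*} [MetricSpace X] (hX : ∀ x : X, Filter.NeBot (𝓝[≠] x))
    {S : Set X} (hS : Dense S) :
    ∀ (n : ℕ) (c : Fin n → X) (ε : ℝ), 0 < ε →
      ∃ y : Fin n → X, Function.Injective y ∧ ∀ i, y i ∈ S ∧ dist (y i) (c i) < ε := by
  classical
  intro n
  induction n with
  | zero => intro c ε hε; exact ⟨Fin.elim0, fun i => i.elim0, fun i => i.elim0⟩
  | succ m ih =>
    intro c ε hε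
    obtain ⟨y, hinj, hy⟩ := ih (fun i => c i.castSucc) ε hε
    have hopen : IsOpen (Metric.ball (c (Fin.last m)) ε \ ↑(Finset.image y Finset.univ)) :=
      Metric.isOpen_ball.sdiff (Finset.image y Finset.univ).finite_toSet.isClosed
    have hne2 : (Metric.ball (c (Fin.last m)) ε \ ↑(Finset.image y Finset.univ)).Nonempty :=
      diff_finset_nonempty' hX _ _ Metric.isOpen_ball (Metric.nonempty_ball.2 hε)
    obtain ⟨s, hsS, hsU⟩ := hS.exists_mem_open hopen hne2
    have hsnot : s ∉ Set.range y := by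
      intro ⟨j, hj⟩
      exact hsU.2 (by simp [← hj])
    refine ⟨Fin.snoc y s, ?_, ?_⟩
    · intro i j hij
      rcases Fin.eq_castSucc_or_eq_last i with ⟨i', rfl⟩ | rfl <;>
        rcases Fin.eq_castSucc_or_eq_last j with ⟨j', rfl⟩ | rfl
      · simp only [Fin.snoc_castSucc] at hij
        exact congrArg _ (hinj hij)
      · simp only [Fin.snoc_castSucc, Fin.snoc_last] at hij
        exact absurd ⟨i', hij⟩ hsnot
      · simp only [Fin.snoc_castSucc, Fin.snoc_last] at hij
        exact absurd ⟨j', hij.symm⟩ hsnot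
      · rfl
    · intro i
      refine Fin.lastCases ?_ ?_ i
      · simp only [Fin.snoc_last]
        exact ⟨hsS, Metric.mem_ball.1 hsU.1⟩
      · intro i
        simp only [Fin.snoc_castSucc]
        exact hy i

theorem stmt1 {X : Type*} [MetricSpace X] [CompleteSpace X]
    [TopologicalSpace.SeparableSpace X] (hX : ∀ x : X, Filter.NeBot (𝓝[≠] x))
    (f : X → X) (hf : Continuous f)
    (S : Set X) (hSdense : Dense S)
    (hS2 : ∃ x ∈ S, ∃ y ∈ S, x ≠ y)
    (hscr : ∃ p q : ℕ → ℕ, ∀ x ∈ S, ∀ y ∈ S, x ≠ y →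
      Tendsto (fun n => dist (f^[p n] x) (f^[p n] y)) atTop (𝓝 0) ∧
      Tendsto (fun n => dist (f^[q n] x) (f^[q n] y)) atTop atTop) :
    ∀ k : ℕ, 2 ≤ k →
      Dense {x : Fin k → X |
        ∀ ε > 0, ∃ᶠ n in atTop, ∀ i j : Fin k, i < j →
          dist (f^[n] (x i)) (f^[n] (x j)) < ε} ∧
      Dense {x : Fin k → X |
        ∀ M : ℝ, ∃ᶠ n in atTop, ∀ i j : Fin k, i < j →
          M < dist (f^[n] (x i)) (f^[n] (x j))} := by
  intro k hk
  obtain ⟨p, q, hpq⟩ := hscr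
  have key : ∀ T : Set (Fin k → X),
      (∀ y : Fin k → X, Function.Injective y → (∀ i, y i ∈ S) → y ∈ T) → Dense T := by
    intro T hT
    rw [Metric.dense_iff]
    intro x r hr
    obtain ⟨y, hinj, hy⟩ := exists_tuple' hX hSdense k x r hr
    exact ⟨y, Metric.mem_ball.2 ((dist_pi_lt_iff hr).2 fun i => (hy i).2),
      hT y hinj fun i => (hy i).1⟩
  have i0 : Fin k := ⟨0, by omega⟩
  have i1 : Fin k := ⟨1, by omega⟩
  constructor
  · apply key
    intro y hinj hyS ε hε
    set i0 : Fin k := ⟨0, by omega⟩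
    set i1 : Fin k := ⟨1, by omega⟩
    have hab : y i0 ≠ y i1 := hinj.ne (by simp [i0, i1, Fin.ext_iff])
    have hev : ∀ᶠ m in atTop, ∀ i j : Fin k, i < j →
        dist (f^[p m] (y i)) (f^[p m] (y j)) < ε := by
      rw [eventually_all]; intro i; rw [eventually_all]; intro j
      by_cases hij : i < j
      · have hd := (hpq (y i) (hyS i) (y j) (hyS j) (hinj.ne hij.ne)).1
        filter_upwards [hd.eventually_lt_const hε] with m hm _
        exact hm
      · exact Eventually.of_forall fun m h => absurd h hij
    by_contra hcon
    rw [not_frequently] at hcon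
    obtain ⟨N, hN⟩ := eventually_atTop.1 hcon
    have hmem : ∀ᶠ m in atTop, p m ∈ Finset.range N := by
      filter_upwards [hev] with m hm
      rw [Finset.mem_range]
      by_contra hge
      exact hN (p m) (not_lt.1 hge) hm
    obtain ⟨v, hv⟩ : ∃ v, ∃ᶠ m in atTop, p m = v := by
      by_contra hc
      push_neg at hc
      have h2 : ∀ᶠ m in atTop, ∀ v ∈ Finset.range N, p m ≠ v := by
        rw [eventually_all_finset]
        intro v _
        exact hc v
      obtain ⟨m, hm1, hm2⟩ := (hmem.and h2).exists
      exact hm2 (p m) hm1 rfl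
    have hcollapse : f^[v] (y i0) = f^[v] (y i1) := by
      have hd := (hpq _ (hyS i0) _ (hyS i1) hab).1
      by_contra hne
      have hdpos : (0 : ℝ) < dist (f^[v] (y i0)) (f^[v] (y i1)) := dist_pos.2 hne
      obtain ⟨m, hm1, hm2⟩ := (hv.and_eventually (hd.eventually_lt_const hdpos)).exists
      rw [hm1] at hm2
      exact lt_irrefl _ hm2
    have htop := (hpq _ (hyS i0) _ (hyS i1) hab).2
    have hfreq : ∃ᶠ n in atTop, v ≤ q n := by
      by_contra hc
      rw [not_frequently] at hc
      set B := ∑ w ∈ Finset.range v, dist (f^[w] (y i0)) (f^[w] (y i1)) with hB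
      obtain ⟨n, hn1, hn2⟩ := (hc.and (htop.eventually_gt_atTop B)).exists
      have hle : dist (f^[q n] (y i0)) (f^[q n] (y i1)) ≤ B :=
        Finset.single_le_sum (f := fun w => dist (f^[w] (y i0)) (f^[w] (y i1)))
          (fun w _ => dist_nonneg) (Finset.mem_range.2 (not_le.1 hn1))
      linarith
    obtain ⟨n, hn1, hn2⟩ := (hfreq.and_eventually (htop.eventually_gt_atTop 1)).exists
    have heq : f^[q n] (y i0) = f^[q n] (y i1) := by
      have h1 : q n = (q n - v) + v := (Nat.sub_add_cancel hn1).symm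
      rw [h1, Function.iterate_add_apply, Function.iterate_add_apply, hcollapse]
    rw [heq, dist_self] at hn2
    linarith
  · apply key
    intro y hinj hyS M
    set i0 : Fin k := ⟨0, by omega⟩
    set i1 : Fin k := ⟨1, by omega⟩
    have hab : y i0 ≠ y i1 := hinj.ne (by simp [i0, i1, Fin.ext_iff])
    have hev : ∀ᶠ m in atTop, ∀ i j : Fin k, i < j →
        M < dist (f^[q m] (y i)) (f^[q m] (y j)) := by
      rw [eventually_all]; intro i; rw [eventually_all]; intro j
      by_cases hij : i < j
      · have hd := (hpq (y i) (hyS i) (y j) (hyS j) (hinj.ne hij.ne)).2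
        filter_upwards [hd.eventually_gt_atTop M] with m hm _
        exact hm
      · exact Eventually.of_forall fun m h => absurd h hij
    by_contra hcon
    rw [not_frequently] at hcon
    obtain ⟨N, hN⟩ := eventually_atTop.1 hcon
    have hlt : ∀ᶠ m in atTop, q m < N := by
      filter_upwards [hev] with m hm
      by_contra hge
      exact hN (q m) (not_lt.1 hge) hm
    have htop := (hpq _ (hyS i0) _ (hyS i1) hab).2
    set B := ∑ w ∈ Finset.range N, dist (f^[w] (y i0)) (f^[w] (y i1)) with hB
    obtain ⟨m, hm1, hm2⟩ := (hlt.and (htop.eventually_gt_atTop B)).exists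
    have hle : dist (f^[q m] (y i0)) (f^[q m] (y i1)) ≤ B :=
      Finset.single_le_sum (f := fun w => dist (f^[w] (y i0)) (f^[w] (y i1)))
        (fun w _ => dist_nonneg) (Finset.mem_range.2 hm1)
    linarith
end

section
/- Let (X,d) be a complete separable metric space with infinite diameter and f: X → X a continuous weakly mixing map. Then f is densely uniformly Li–Yorke chaotic, i.e., there exists a dense uncountable subset S of X and sequences {p_n}, {q_n} in ℕ such that for all distinct x, y ∈ S, d(f^{p_n}(x), f^{p_n}(y)) → 0 and d(f^{q_n}(x), f^{q_n}(y)) → ∞. -/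
open Filter Topology Metric Set

section Aux
variable {X : Type*} [MetricSpace X]

/-- Stage data for the construction. -/
structure SD (X : Type*) where
  c : ℕ → (ℕ → Bool) → X
  r : ℕ → (ℕ → Bool) → ℝ
  p : ℕ
  q : ℕ

variable (f : X → X)

def WM (f : X → X) : Prop := ∀ U V : Set (X × X), IsOpen U → IsOpen V → U.Nonempty → V.Nonempty →
      ∃ n : ℕ, (U ∩ (Prod.map f f)^[n] ⁻¹' V).Nonempty

/-- one-dimensional transitivity -/
lemma wm1 (hwm : WM f) [Nonempty X] {U V : Set X} (hU : IsOpen U) (hV : IsOpen V)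
    (hUne : U.Nonempty) (hVne : V.Nonempty) : ∃ n, (U ∩ f^[n] ⁻¹' V).Nonempty := by
  obtain ⟨n, ⟨a, b⟩, hab⟩ := hwm (U ×ˢ (univ : Set X)) (V ×ˢ (univ : Set X))
    (hU.prod isOpen_univ) (hV.prod isOpen_univ) (hUne.prod ⟨Classical.arbitrary X, trivial⟩)
    (hVne.prod ⟨Classical.arbitrary X, trivial⟩)
  refine ⟨n, a, hab.1.1, ?_⟩
  have := hab.2
  rw [Prod.map_iterate] at this
  exact this.1

/-- Furstenberg intersection trick. -/
lemma fur (hwm : WM f) {U₁ V₁ U₂ V₂ : Set X} (hU₁ : IsOpen U₁) (hV₁ : IsOpen V₁)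
    (hU₂ : IsOpen U₂) (hV₂ : IsOpen V₂) (hU₁n : U₁.Nonempty) (hV₁n : V₁.Nonempty)
    (hU₂n : U₂.Nonempty) (hV₂n : V₂.Nonempty) (hfc : Continuous f) :
    ∃ U V : Set X, IsOpen U ∧ IsOpen V ∧ U.Nonempty ∧ V.Nonempty ∧ U ⊆ U₁ ∧ V ⊆ V₁ ∧
      ∀ n, (U ∩ f^[n] ⁻¹' V).Nonempty → (U₂ ∩ f^[n] ⁻¹' V₂).Nonempty := by
  obtain ⟨n₀, ⟨a, b⟩, hab⟩ := hwm (U₁ ×ˢ V₁) (U₂ ×ˢ V₂) (hU₁.prod hV₁) (hU₂.prod hV₂)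
    (hU₁n.prod hV₁n) (hU₂n.prod hV₂n)
  have h2 := hab.2
  rw [Prod.map_iterate] at h2
  refine ⟨U₁ ∩ f^[n₀] ⁻¹' U₂, V₁ ∩ f^[n₀] ⁻¹' V₂,
    hU₁.inter (hU₂.preimage (hfc.iterate n₀)), hV₁.inter (hV₂.preimage (hfc.iterate n₀)),
    ⟨a, hab.1.1, h2.1⟩, ⟨b, hab.1.2, h2.2⟩, inter_subset_left, inter_subset_left, ?_⟩
  rintro n ⟨x, ⟨hx1, hx2⟩, hx3, hx4⟩
  refine ⟨f^[n₀] x, hx2, ?_⟩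
  show f^[n] (f^[n₀] x) ∈ V₂
  rw [← Function.iterate_add_apply, Nat.add_comm, Function.iterate_add_apply]
  exact hx4

lemma multi_list (hwm : WM f) (hfc : Continuous f) [Nonempty X] :
    ∀ L : List (Set X × Set X), (∀ pq ∈ L, IsOpen pq.1 ∧ IsOpen pq.2 ∧ pq.1.Nonempty ∧ pq.2.Nonempty) →
    ∃ U V : Set X, IsOpen U ∧ IsOpen V ∧ U.Nonempty ∧ V.Nonempty ∧
      ∀ n, (U ∩ f^[n] ⁻¹' V).Nonempty → ∀ pq ∈ L, (pq.1 ∩ f^[n] ⁻¹' pq.2).Nonempty := by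
  intro L
  induction L with
  | nil => exact fun _ => ⟨univ, univ, isOpen_univ, isOpen_univ, univ_nonempty, univ_nonempty,
      fun n _ pq h => absurd h List.not_mem_nil⟩
  | cons a L ih =>
    intro hL
    obtain ⟨U, V, hU, hV, hUn, hVn, himp⟩ := ih (fun pq h => hL pq (List.mem_cons_of_mem a h))
    obtain ⟨ha1, ha2, ha3, ha4⟩ := hL a List.mem_cons_self
    obtain ⟨U', V', hU', hV', hU'n, hV'n, hsubU, hsubV, himp'⟩ :=
      fur f hwm hU hV ha1 ha2 hUn hVn ha3 ha4 hfc
    refine ⟨U', V', hU', hV', hU'n, hV'n, fun n hn pq hpq => ?_⟩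
    rcases List.mem_cons.1 hpq with h | h
    · subst h; exact himp' n hn
    · exact himp n (hn.mono (inter_subset_inter hsubU (preimage_mono hsubV))) pq h

lemma multi (hwm : WM f) (hfc : Continuous f) [Nonempty X] {ι : Type*} [Fintype ι]
    (U V : ι → Set X) (hU : ∀ i, IsOpen (U i)) (hV : ∀ i, IsOpen (V i))
    (hUn : ∀ i, (U i).Nonempty) (hVn : ∀ i, (V i).Nonempty) :
    ∃ n, ∀ i, (U i ∩ f^[n] ⁻¹' V i).Nonempty := by
  obtain ⟨U₀, V₀, hU₀, hV₀, hU₀n, hV₀n, himp⟩ := multi_list f hwm hfc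
    ((Finset.univ : Finset ι).toList.map (fun i => (U i, V i)))
    (by
      intro pq hpq
      obtain ⟨i, _, rfl⟩ := List.mem_map.1 hpq
      exact ⟨hU i, hV i, hUn i, hVn i⟩)
  obtain ⟨n, hn⟩ := wm1 f hwm hU₀ hV₀ hU₀n hV₀n
  refine ⟨n, fun i => himp n hn (U i, V i) ?_⟩
  exact List.mem_map.2 ⟨i, by simp, rfl⟩

lemma shrink (hwm : WM f) (hfc : Continuous f) [Nonempty X] {ι : Type*} [Fintype ι]
    (c : ι → X) (r : ι → ℝ) (hr : ∀ i, 0 < r i) (V : ι → Set X)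
    (hVo : ∀ i, IsOpen (V i)) (hVne : ∀ i, (V i).Nonempty) :
    ∃ (n : ℕ) (c' : ι → X) (r' : ι → ℝ), ∀ i, 0 < r' i ∧
      closedBall (c' i) (r' i) ⊆ ball (c i) (r i) ∧
      ∀ x ∈ closedBall (c' i) (r' i), f^[n] x ∈ V i := by
  obtain ⟨n, hn⟩ := multi f hwm hfc (fun i => ball (c i) (r i)) V
    (fun i => isOpen_ball) hVo (fun i => ⟨c i, mem_ball_self (hr i)⟩) hVne
  choose x hx1 hx2 using hn
  have hopen : ∀ i, IsOpen (ball (c i) (r i) ∩ f^[n] ⁻¹' V i) :=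
    fun i => isOpen_ball.inter ((hVo i).preimage (hfc.iterate n))
  have hmem : ∀ i, ∃ ε > 0, ball (x i) ε ⊆ ball (c i) (r i) ∩ f^[n] ⁻¹' V i := by
    intro i
    exact Metric.isOpen_iff.1 (hopen i) (x i) ⟨hx1 i, hx2 i⟩
  choose ε hε hsub using hmem
  refine ⟨n, x, fun i => ε i / 2, fun i => ⟨half_pos (hε i), ?_, ?_⟩⟩
  · intro y hy
    exact (hsub i (lt_of_le_of_lt hy (half_lt_self (hε i)))).1
  · intro y hy
    exact (hsub i (lt_of_le_of_lt hy (half_lt_self (hε i)))).2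

/-- a point far from finitely many given points -/
lemma far (hdiam : ∀ M : ℝ, ∃ x y : X, M < dist x y) {ι : Type*} (s : Finset ι)
    (w : ι → X) (M : ℝ) : ∃ z : X, ∀ j ∈ s, M ≤ dist z (w j) := by
  obtain ⟨a₀, -, -⟩ := hdiam 0
  set B : ℝ := ∑ j ∈ s, dist (w j) a₀ with hB
  have hBj : ∀ j ∈ s, dist (w j) a₀ ≤ B :=
    fun j hj => Finset.single_le_sum (fun i _ => dist_nonneg) hj
  obtain ⟨x, y, hxy⟩ := hdiam (2 * (|M| + B))
  have h2 : 2 * (|M| + B) < dist x a₀ + dist a₀ y := lt_of_lt_of_le hxy (dist_triangle _ _ _)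
  have hcase : |M| + B < dist x a₀ ∨ |M| + B < dist y a₀ := by
    by_contra hc
    push_neg at hc
    rw [dist_comm a₀ y] at h2
    linarith [hc.1, hc.2]
  rcases hcase with h | h
  · exact ⟨x, fun j hj => by
      have := dist_triangle x a₀ (w j)
      rw [dist_comm a₀ (w j)] at this
      have := hBj j hj
      calc M ≤ |M| := le_abs_self M
        _ ≤ dist x a₀ - dist (w j) a₀ := by linarith
        _ ≤ dist x (w j) := by
            have := dist_triangle x (w j) a₀
            linarith⟩
  · exact ⟨y, fun j hj => by
      have := hBj j hj
      calc M ≤ |M| := le_abs_self M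
        _ ≤ dist y a₀ - dist (w j) a₀ := by linarith
        _ ≤ dist y (w j) := by
            have := dist_triangle y (w j) a₀
            linarith⟩

lemma farfam (hdiam : ∀ M : ℝ, ∃ x y : X, M < dist x y) {ι : Type*} [Fintype ι] (M : ℝ) :
    ∃ w : ι → X, ∀ i j : ι, i ≠ j → M ≤ dist (w i) (w j) := by
  obtain ⟨a₀, -, -⟩ := hdiam 0
  suffices h : ∀ s : Finset ι, ∃ w : ι → X, ∀ i ∈ s, ∀ j ∈ s, i ≠ j → M ≤ dist (w i) (w j) by
    obtain ⟨w, hw⟩ := h Finset.univ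
    exact ⟨w, fun i j hij => hw i (Finset.mem_univ i) j (Finset.mem_univ j) hij⟩
  intro s
  classical
  induction s using Finset.induction_on with
  | empty => exact ⟨fun _ => a₀, fun i hi => absurd hi (Finset.notMem_empty i)⟩
  | @insert a s ha ih =>
    obtain ⟨w, hw⟩ := ih
    obtain ⟨z, hz⟩ := far hdiam s w M
    refine ⟨fun x => if x ∈ s then w x else z, fun i hi j hj hij => ?_⟩
    rcases Finset.mem_insert.1 hi with rfl | hi' <;> rcases Finset.mem_insert.1 hj with rfl | hj'
    · exact absurd rfl hij
    · simp only [if_neg ha, if_pos hj']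
      exact hz j hj'
    · simp only [if_neg ha, if_pos hi', dist_comm]
      exact hz i hi'
    · simp only [if_pos hi', if_pos hj']
      exact hw i hi' j hj' hij

end Aux

section Main
variable {X : Type*} [MetricSpace X]

def cbl (d : SD X) (k : ℕ) (σ : ℕ → Bool) : Set X := closedBall (d.c k σ) (d.r k σ)

/-- The invariant at stage m. -/
def SInv (f : X → X) (u : ℕ → X) (m : ℕ) (d : SD X) : Prop :=
  (∀ k ≤ m, ∀ σ σ' : ℕ → Bool, (∀ i, i < m - k → σ i = σ' i) →
      d.c k σ = d.c k σ' ∧ d.r k σ = d.r k σ') ∧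
  (∀ k ≤ m, ∀ σ, 0 < d.r k σ) ∧
  (∀ k ≤ m, ∀ σ, d.r k σ ≤ (1/2 : ℝ)^m) ∧
  (∀ k ≤ m, ∀ σ, cbl d k σ ⊆ ball (u (Nat.unpair k).1) (1/((Nat.unpair k).2+1))) ∧
  (∀ k ≤ m, ∀ σ, ∀ k' ≤ m, ∀ σ', ∀ x ∈ cbl d k σ, ∀ y ∈ cbl d k' σ',
      dist (f^[d.p] x) (f^[d.p] y) ≤ 1/(m+1)) ∧
  (∀ k ≤ m, ∀ σ, ∀ k' ≤ m, ∀ σ', (¬ (k = k' ∧ ∀ i, i < m - k → σ i = σ' i)) →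
      ∀ x ∈ cbl d k σ, ∀ y ∈ cbl d k' σ', (m : ℝ) ≤ dist (f^[d.q] x) (f^[d.q] y))

def LinkD (cur nxt : SD X) (m : ℕ) : Prop := ∀ k ≤ m, ∀ σ, cbl nxt k σ ⊆ cbl cur k σ

lemma base_inv (f : X → X) (u : ℕ → X) :
    SInv f u 0 ⟨fun _ _ => u 0, fun _ _ => 1/2, 0, 0⟩ := by
  refine ⟨fun _ _ _ _ _ => ⟨rfl, rfl⟩, fun _ _ _ => by norm_num,
    fun _ _ _ => by norm_num, ?_, ?_, ?_⟩
  · intro k hk σ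
    interval_cases k
    simp only [cbl, Nat.unpair_zero]
    intro x hx
    simp only [mem_closedBall] at hx
    simp only [mem_ball]
    norm_num at hx ⊢
    linarith
  · intro k hk σ k' hk' σ' x hx y hy
    simp only [cbl, mem_closedBall] at hx hy
    simp only [Function.iterate_zero_apply]
    have := dist_triangle x (u 0) y
    rw [dist_comm (u 0) y] at this
    norm_num at hx hy ⊢
    linarith
  · intro k hk σ k' hk' σ' _ x hx y hy
    simpa using dist_nonneg

lemma exists_step (f : X → X) (hf : Continuous f) (hwm : WM f)
    (hdiam : ∀ M : ℝ, ∃ x y : X, M < dist x y) (u : ℕ → X) (m : ℕ) (cur : SD X)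
    (hcur : SInv f u m cur) :
    ∃ nxt : SD X, SInv f u (m+1) nxt ∧ LinkD cur nxt m := by
  haveI : Nonempty X := ⟨u 0⟩
  obtain ⟨hloc, hrpos, hrsmall, hseed, hpc, hqc⟩ := hcur
  -- index type for the finite family of balls at stage m+1
  set ι := Fin (m+2) × (Fin (m+1) → Bool) with hι
  -- recovering an infinite binary word from an index
  set ext : ι → (ℕ → Bool) := fun i j => if h : j < m+1 then i.2 ⟨j, h⟩ else false with hext
  -- initial balls
  set c₀ : ι → X := fun i => if (i.1 : ℕ) ≤ m then cur.c i.1 (ext i)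
      else u (Nat.unpair (m+1)).1 with hc₀
  set r₀ : ι → ℝ := fun i => if (i.1 : ℕ) ≤ m then cur.r i.1 (ext i) / 2
      else (1/((Nat.unpair (m+1)).2+1))/2 with hr₀
  have hr₀pos : ∀ i, 0 < r₀ i := by
    intro i
    rw [hr₀]
    dsimp only
    split
    · exact half_pos (hrpos i.1 (by assumption) (ext i))
    · positivity
  -- round 1 : spreading out under f^[q']
  obtain ⟨w, hw⟩ := farfam hdiam (ι := ι) (2*m+6)
  obtain ⟨q', c₁, r₁, h₁⟩ := shrink f hwm hf c₀ r₀ hr₀pos (fun i => ball (w i) 1)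
    (fun _ => isOpen_ball) (fun i => ⟨w i, mem_ball_self one_pos⟩)
  -- round 2 : contracting under f^[p']
  obtain ⟨p', c₂, r₂, h₂⟩ := shrink f hwm hf c₁ r₁ (fun i => (h₁ i).1)
    (fun _ => ball (u 0) (1/(2*(m+2)))) (fun _ => isOpen_ball)
    (fun i => ⟨u 0, mem_ball_self (by positivity)⟩)
  set r₃ : ι → ℝ := fun i => min (r₂ i) ((1/2)^(m+1)) with hr₃
  -- the next stage
  set idx : (k : ℕ) → k ≤ m+1 → (ℕ → Bool) → ι := fun k hk σ =>
    (⟨k, Nat.lt_succ_of_le hk⟩, fun j => if (j : ℕ) < m+1-k then σ (j : ℕ) else false) with hidx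
  set nxt : SD X := ⟨fun k σ => if h : k ≤ m+1 then c₂ (idx k h σ) else u 0,
      fun k σ => if h : k ≤ m+1 then r₃ (idx k h σ) else 1, p', q'⟩ with hnxt
  -- basic chains
  have hchain2 : ∀ i, closedBall (c₂ i) (r₂ i) ⊆ closedBall (c₁ i) (r₁ i) :=
    fun i => (h₂ i).2.1.trans ball_subset_closedBall
  have hchain1 : ∀ i, closedBall (c₁ i) (r₁ i) ⊆ closedBall (c₀ i) (r₀ i) :=
    fun i => (h₁ i).2.1.trans ball_subset_closedBall
  have hchain3 : ∀ i, closedBall (c₂ i) (r₃ i) ⊆ closedBall (c₂ i) (r₂ i) :=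
    fun i => closedBall_subset_closedBall (min_le_left _ _)
  have hcbl : ∀ (k : ℕ) (h : k ≤ m+1) (σ : ℕ → Bool),
      cbl nxt k σ = closedBall (c₂ (idx k h σ)) (r₃ (idx k h σ)) := by
    intro k h σ
    rw [cbl, hnxt]
    simp only [dif_pos h]
  -- the parent ball of an index with k ≤ m
  have hparent : ∀ (k : ℕ) (h : k ≤ m+1) (σ : ℕ → Bool), k ≤ m →
      closedBall (c₀ (idx k h σ)) (r₀ (idx k h σ)) ⊆ cbl cur k σ := by
    intro k h σ hkm
    have hfst : ((idx k h σ).1 : ℕ) = k := rfl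
    have heq : cur.c k (ext (idx k h σ)) = cur.c k σ ∧ cur.r k (ext (idx k h σ)) = cur.r k σ := by
      apply hloc k hkm
      intro i hi
      rw [hext, hidx]
      have h1 : i < m + 1 := by omega
      have h2 : i < m + 1 - k := by omega
      simp only [dif_pos h1, if_pos h2]
    rw [hc₀, hr₀]
    dsimp only
    rw [if_pos hkm, if_pos hkm, heq.1, heq.2]
    exact closedBall_subset_closedBall (by linarith [hrpos k hkm σ])
  have hchainAll : ∀ (k : ℕ) (h : k ≤ m+1) (σ : ℕ → Bool),
      cbl nxt k σ ⊆ closedBall (c₀ (idx k h σ)) (r₀ (idx k h σ)) := by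
    intro k h σ
    rw [hcbl k h σ]
    exact (hchain3 _).trans ((hchain2 _).trans (hchain1 _))
  refine ⟨nxt, ⟨?_, ?_, ?_, ?_, ?_, ?_⟩, ?_⟩
  · -- locality
    intro k hk σ σ' hag
    have : idx k hk σ = idx k hk σ' := by
      have h2 : (fun j : Fin (m+1) => if (j:ℕ) < m+1-k then σ (j:ℕ) else false) =
          (fun j : Fin (m+1) => if (j:ℕ) < m+1-k then σ' (j:ℕ) else false) := by
        funext j
        split
        · exact hag _ (by omega)
        · rfl
      rw [hidx]
      dsimp only
      rw [h2]
    constructor <;> · rw [hnxt]; dsimp only; rw [dif_pos hk, dif_pos hk, this]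
  · -- positivity of radii
    intro k hk σ
    rw [hnxt]
    dsimp only
    rw [dif_pos hk, hr₃]
    exact lt_min (h₂ _).1 (by positivity)
  · -- smallness of radii
    intro k hk σ
    rw [hnxt]
    dsimp only
    rw [dif_pos hk, hr₃]
    exact min_le_right _ _
  · -- seed condition
    intro k hk σ
    rcases Nat.lt_or_ge k (m+1) with hkm | hkm
    · have hkm' : k ≤ m := by omega
      refine (hchainAll k hk σ).trans ((hparent k hk σ hkm').trans (hseed k hkm' σ))
    · have hk1 : k = m + 1 := by omega
      subst hk1
      refine (hchainAll (m+1) hk σ).trans ?_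
      have hfst : ¬ (((idx (m+1) hk σ).1 : ℕ) ≤ m) := by
        simp only [hidx]
        omega
      rw [hc₀, hr₀]
      dsimp only
      rw [if_neg hfst, if_neg hfst]
      intro x hx
      rw [mem_closedBall] at hx
      rw [mem_ball]
      have : (0:ℝ) < 1/((Nat.unpair (m+1)).2+1) := by positivity
      linarith
  · -- proximality condition
    intro k hk σ k' hk' σ' x hx y hy
    have hx2 : x ∈ closedBall (c₂ (idx k hk σ)) (r₂ (idx k hk σ)) := by
      rw [hcbl k hk σ] at hx
      exact hchain3 _ hx
    have hy2 : y ∈ closedBall (c₂ (idx k' hk' σ')) (r₂ (idx k' hk' σ')) := by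
      rw [hcbl k' hk' σ'] at hy
      exact hchain3 _ hy
    have hfx := (h₂ (idx k hk σ)).2.2 x hx2
    have hfy := (h₂ (idx k' hk' σ')).2.2 y hy2
    rw [mem_ball] at hfx hfy
    have hp : nxt.p = p' := rfl
    rw [hp]
    have htri := dist_triangle (f^[p'] x) (u 0) (f^[p'] y)
    rw [dist_comm (u 0) (f^[p'] y)] at htri
    have harith : (1:ℝ)/(2*((m:ℝ)+2)) + 1/(2*((m:ℝ)+2)) = 1/((m:ℝ)+2) := by
      rw [← two_mul, mul_one_div, div_eq_div_iff (by positivity) (by positivity)]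
      ring
    push_cast
    calc dist (f^[p'] x) (f^[p'] y) ≤ dist (f^[p'] x) (u 0) + dist (f^[p'] y) (u 0) := htri
      _ ≤ 1/(2*((m:ℝ)+2)) + 1/(2*((m:ℝ)+2)) := by linarith
      _ = 1/((m:ℝ)+2) := harith
      _ ≤ 1/((m:ℝ)+1+1) := by
          rw [show ((m:ℝ)+1+1) = (m:ℝ)+2 from by ring]
  · -- separation condition
    intro k hk σ k' hk' σ' hne x hx y hy
    have hii : idx k hk σ ≠ idx k' hk' σ' := by
      intro he
      apply hne
      have hfst : k = k' := by
        have := congrArg (fun i : ι => ((i.1 : Fin (m+2)) : ℕ)) he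
        simpa [hidx] using this
      subst hfst
      refine ⟨rfl, fun j hj => ?_⟩
      have hsnd := congrArg Prod.snd he
      have hj1 : j < m + 1 := by omega
      have := congrFun hsnd ⟨j, hj1⟩
      simp only [hidx, if_pos hj] at this
      exact this
    have hx1 : x ∈ closedBall (c₁ (idx k hk σ)) (r₁ (idx k hk σ)) := by
      rw [hcbl k hk σ] at hx
      exact hchain2 _ (hchain3 _ hx)
    have hy1 : y ∈ closedBall (c₁ (idx k' hk' σ')) (r₁ (idx k' hk' σ')) := by
      rw [hcbl k' hk' σ'] at hy
      exact hchain2 _ (hchain3 _ hy)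
    have hfx := (h₁ (idx k hk σ)).2.2 x hx1
    have hfy := (h₁ (idx k' hk' σ')).2.2 y hy1
    rw [mem_ball] at hfx hfy
    have hwd := hw _ _ hii
    have hq : nxt.q = q' := rfl
    rw [hq]
    have h4 := dist_triangle4 (w (idx k hk σ)) (f^[q'] x) (f^[q'] y) (w (idx k' hk' σ'))
    rw [dist_comm (f^[q'] x) (w (idx k hk σ))] at hfx
    push_cast
    linarith
  · -- the link
    intro k hk σ
    have hk1 : k ≤ m + 1 := by omega
    exact (hchainAll k hk1 σ).trans (hparent k hk1 σ hk)

lemma notCountable_funBool : ¬ Countable (ℕ → Bool) := by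
  intro h
  obtain ⟨g, hg⟩ := exists_surjective_nat (ℕ → Bool)
  obtain ⟨n, hn⟩ := hg (fun n => ! g n n)
  have := congrFun hn n
  simp at this

variable (f : X → X) (hf : Continuous f) (hwm : WM f)
  (hdiam : ∀ M : ℝ, ∃ x y : X, M < dist x y) (u : ℕ → X)

noncomputable def DD : ∀ m : ℕ, {d : SD X // SInv f u m d} :=
  fun m => Nat.rec ⟨⟨fun _ _ => u 0, fun _ _ => 1/2, 0, 0⟩, base_inv f u⟩
    (fun m' prev => ⟨Classical.choose (exists_step f hf hwm hdiam u m' prev.1 prev.2),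
      (Classical.choose_spec (exists_step f hf hwm hdiam u m' prev.1 prev.2)).1⟩) m

lemma DD_link (m : ℕ) :
    LinkD (DD f hf hwm hdiam u m).1 (DD f hf hwm hdiam u (m+1)).1 m :=
  (Classical.choose_spec (exists_step f hf hwm hdiam u m
    (DD f hf hwm hdiam u m).1 (DD f hf hwm hdiam u m).2)).2

lemma DD_nested (k : ℕ) (σ : ℕ → Bool) {m m' : ℕ} (hk : k ≤ m) (hm : m ≤ m') :
    cbl (DD f hf hwm hdiam u m').1 k σ ⊆ cbl (DD f hf hwm hdiam u m).1 k σ := by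
  induction m' , hm using Nat.le_induction with
  | base => exact subset_refl _
  | succ n hn ih =>
    exact (DD_link f hf hwm hdiam u n k (le_trans hk hn) σ).trans ih

lemma DD_pt [CompleteSpace X] (k : ℕ) (σ : ℕ → Bool) :
    ∃ x : X, ∀ m, k ≤ m → x ∈ cbl (DD f hf hwm hdiam u m).1 k σ := by
  set D : ℕ → SD X := fun m => (DD f hf hwm hdiam u m).1 with hD
  set a : ℕ → X := fun n => (D (n+k)).c k σ with ha
  have hmem : ∀ n, a n ∈ cbl (D (n+k)) k σ := by
    intro n
    exact mem_closedBall_self (le_of_lt ((DD f hf hwm hdiam u (n+k)).2.2.1 k (by omega) σ))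
  have hcauchy : CauchySeq a := by
    apply cauchySeq_of_le_geometric (1/2 : ℝ) 1 (by norm_num)
    intro n
    have h1 : a (n+1) ∈ cbl (D (n+k)) k σ :=
      DD_nested f hf hwm hdiam u k σ (by omega) (by omega) (hmem (n+1))
    have h2 : dist (a (n+1)) ((D (n+k)).c k σ) ≤ (D (n+k)).r k σ := h1
    have h3 : (D (n+k)).r k σ ≤ (1/2 : ℝ)^(n+k) :=
      (DD f hf hwm hdiam u (n+k)).2.2.2.1 k (by omega) σ
    have h4 : ((1:ℝ)/2)^(n+k) ≤ (1/2)^n := by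
      apply pow_le_pow_of_le_one (by norm_num) (by norm_num)
      omega
    rw [dist_comm]
    calc dist (a (n+1)) (a n) ≤ (1/2:ℝ)^(n+k) := le_trans h2 h3
      _ ≤ (1/2)^n := h4
      _ = 1 * (1/2)^n := (one_mul _).symm
  obtain ⟨x, hx⟩ := cauchySeq_tendsto_of_complete hcauchy
  refine ⟨x, fun m hm => ?_⟩
  refine IsClosed.mem_of_tendsto (Metric.isClosed_closedBall
    (x := (D m).c k σ) (ε := (D m).r k σ)) hx ?_
  rw [eventually_atTop]
  refine ⟨m, fun n hn => ?_⟩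
  exact DD_nested f hf hwm hdiam u k σ hm (by omega) (hmem n)

end Main

theorem stmt3 {X : Type*} [MetricSpace X] [CompleteSpace X]
    [TopologicalSpace.SeparableSpace X]
    (f : X → X) (hf : Continuous f)
    (hdiam : ∀ M : ℝ, ∃ x y : X, M < dist x y)
    (hwm : ∀ U V : Set (X × X), IsOpen U → IsOpen V → U.Nonempty → V.Nonempty →
      ∃ n : ℕ, (U ∩ (Prod.map f f)^[n] ⁻¹' V).Nonempty) :
    ∃ (S : Set X) (p q : ℕ → ℕ), Dense S ∧ ¬ S.Countable ∧
      ∀ x ∈ S, ∀ y ∈ S, x ≠ y →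
        Tendsto (fun n => dist (f^[p n] x) (f^[p n] y)) atTop (𝓝 0) ∧
        Tendsto (fun n => dist (f^[q n] x) (f^[q n] y)) atTop atTop := by
  haveI : Nonempty X := by
    obtain ⟨x, -, -⟩ := hdiam 0
    exact ⟨x⟩
  have hwm' : WM f := hwm
  set u : ℕ → X := TopologicalSpace.denseSeq X with hu
  have hud : DenseRange u := TopologicalSpace.denseRange_denseSeq X
  set D : ℕ → SD X := fun m => (DD f hf hwm' hdiam u m).1 with hD
  have hI : ∀ m, SInv f u m (D m) := fun m => (DD f hf hwm' hdiam u m).2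
  choose pt hpt using DD_pt f hf hwm' hdiam u
  set F : ℕ × (ℕ → Bool) → X := fun z => pt z.1 z.2 with hF
  set S : Set X := Set.range F with hS
  refine ⟨S, fun m => (D m).p, fun m => (D m).q, ?_, ?_, ?_⟩
  · -- Dense
    rw [Metric.dense_iff]
    intro x ε hε
    obtain ⟨i, hi⟩ := Metric.denseRange_iff.1 hud x (ε/2) (by linarith)
    obtain ⟨j, hj⟩ := exists_nat_one_div_lt (show (0:ℝ) < ε/2 by linarith)
    set k := Nat.pair i j with hk
    refine ⟨pt k (fun _ => false), ?_, ⟨(k, fun _ => false), rfl⟩⟩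
    have h1 : pt k (fun _ => false) ∈ cbl (D k) k (fun _ => false) :=
      hpt k (fun _ => false) k le_rfl
    have h2 := (hI k).2.2.2.1 k le_rfl (fun _ => false) h1
    rw [hk, Nat.unpair_pair] at h2
    rw [mem_ball] at h2 ⊢
    calc dist (pt k (fun _ => false)) x
        ≤ dist (pt k (fun _ => false)) (u i) + dist (u i) x := dist_triangle _ _ _
      _ < 1/((j:ℝ)+1) + ε/2 := by
          rw [dist_comm (u i) x]
          exact add_lt_add h2 hi
      _ < ε/2 + ε/2 := by linarith
      _ = ε := by ring
  · -- not countable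
    intro hc
    have hsub : Set.range (fun σ : ℕ → Bool => pt 0 σ) ⊆ S := by
      rintro - ⟨σ, rfl⟩
      exact ⟨(0, σ), rfl⟩
    haveI := (hc.mono hsub).to_subtype
    have hginj : Function.Injective (fun σ : ℕ → Bool => pt 0 σ) := by
      intro σ σ' hσ
      by_contra hne
      obtain ⟨i, hi⟩ := Function.ne_iff.1 hne
      have hdist := (hI (i+1)).2.2.2.2.2 0 (by omega) σ 0 (by omega) σ'
        (by
          rintro ⟨-, hall⟩
          exact hi (hall i (by omega)))
        (pt 0 σ) (hpt 0 σ (i+1) (by omega)) (pt 0 σ') (hpt 0 σ' (i+1) (by omega))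
      have hσ2 : pt 0 σ = pt 0 σ' := hσ
      rw [hσ2, dist_self] at hdist
      have : ((i:ℝ)+1) ≤ 0 := by push_cast at hdist; linarith
      have : (0:ℝ) < (i:ℝ)+1 := by positivity
      linarith
    have : Function.Injective (fun σ : ℕ → Bool =>
        (⟨pt 0 σ, ⟨σ, rfl⟩⟩ : Set.range (fun σ : ℕ → Bool => pt 0 σ))) := by
      intro σ σ' h
      exact hginj (congrArg Subtype.val h)
    exact notCountable_funBool this.countable
  · -- the chaos conditions
    rintro x ⟨⟨k, σ⟩, rfl⟩ y ⟨⟨k', σ'⟩, rfl⟩ hxy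
    simp only [hF] at hxy ⊢
    -- eventually the indices lie in distinct balls
    have hkey : ∃ m0 : ℕ, ∀ m ≥ m0, k ≤ m ∧ k' ≤ m ∧
        ¬ (k = k' ∧ ∀ i, i < m - k → σ i = σ' i) := by
      rcases eq_or_ne k k' with rfl | hkk
      · have hσ : σ ≠ σ' := by
          intro h
          exact hxy (by rw [h])
        obtain ⟨i, hi⟩ := Function.ne_iff.1 hσ
        refine ⟨k + i + 1, fun m hm => ⟨by omega, by omega, ?_⟩⟩
        rintro ⟨-, hall⟩
        exact hi (hall i (by omega))
      · exact ⟨max k k', fun m hm => ⟨le_trans (le_max_left _ _) hm,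
          le_trans (le_max_right _ _) hm, fun h => hkk h.1⟩⟩
    obtain ⟨m0, hm0⟩ := hkey
    constructor
    · -- proximality
      apply squeeze_zero' (Filter.Eventually.of_forall (fun m => dist_nonneg))
        ?_ tendsto_one_div_add_atTop_nhds_zero_nat
      rw [eventually_atTop]
      refine ⟨max k k', fun m hm => ?_⟩
      have hk : k ≤ m := le_trans (le_max_left _ _) hm
      have hk' : k' ≤ m := le_trans (le_max_right _ _) hm
      exact (hI m).2.2.2.2.1 k hk σ k' hk' σ' (pt k σ) (hpt k σ m hk)
        (pt k' σ') (hpt k' σ' m hk')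
    · -- separation
      apply tendsto_atTop_mono' atTop ?_ tendsto_natCast_atTop_atTop
      rw [EventuallyLE, eventually_atTop]
      refine ⟨m0, fun m hm => ?_⟩
      obtain ⟨hk, hk', hdist⟩ := hm0 m hm
      exact (hI m).2.2.2.2.2 k hk σ k' hk' σ' hdist (pt k σ) (hpt k σ m hk)
        (pt k' σ') (hpt k' σ' m hk')
end

section
/- Let (X,d) be a complete separable metric space and f: X → X a continuous strongly mixing map. Then every uniformly Li–Yorke scrambled set for f is of first category (meager) in X. -/
open Filter Topology Metric

theorem stmt5 {X : Type*} [MetricSpace X] [CompleteSpace X]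
    [TopologicalSpace.SeparableSpace X]
    (f : X → X) (hf : Continuous f)
    (hmix : ∀ U V : Set X, IsOpen U → IsOpen V → U.Nonempty → V.Nonempty →
      ∃ N : ℕ, ∀ n ≥ N, (U ∩ f^[n] ⁻¹' V).Nonempty)
    (S : Set X)
    (hS2 : ∃ x ∈ S, ∃ y ∈ S, x ≠ y)
    (hscr : ∃ p q : ℕ → ℕ, ∀ x ∈ S, ∀ y ∈ S, x ≠ y →
      Tendsto (fun n => dist (f^[p n] x) (f^[p n] y)) atTop (𝓝 0) ∧
      Tendsto (fun n => dist (f^[q n] x) (f^[q n] y)) atTop atTop) :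
    IsMeagre S := by
  obtain ⟨x, hxS, y, hyS, hxy⟩ := hS2
  obtain ⟨p, q, hpq⟩ := hscr
  obtain ⟨hp0, hq⟩ := hpq x hxS y hyS hxy
  by_cases hA : ∃ m : ℕ, {n | p n = m}.Infinite
  · -- Degenerate case: some iterate collapses S to a point, contradicting the q-condition.
    exfalso
    obtain ⟨m, hm⟩ := hA
    have heq : f^[m] x = f^[m] y := by
      refine eq_of_forall_dist_le fun ε hε => ?_
      obtain ⟨N, hN⟩ := eventually_atTop.1 (hp0.eventually (ge_mem_nhds hε))
      obtain ⟨n, hnmem, hnN⟩ := hm.exists_gt N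
      have := hN n hnN.le
      simp only [Set.mem_setOf_eq] at hnmem
      rw [hnmem] at this
      exact this
    have heqn : ∀ k ≥ m, f^[k] x = f^[k] y := by
      intro k hk
      have : k = (k - m) + m := (Nat.sub_add_cancel hk).symm
      rw [this, Function.iterate_add_apply, Function.iterate_add_apply, heq]
    -- the distances along q are bounded, contradicting tendsto atTop
    set C : ℝ := (Finset.range (m + 1)).sup' (by simp) (fun j => dist (f^[j] x) (f^[j] y))
    have hbdd : ∀ n, dist (f^[q n] x) (f^[q n] y) ≤ C := by
      intro n
      by_cases h : q n < m + 1
      · exact Finset.le_sup' (fun j => dist (f^[j] x) (f^[j] y)) (Finset.mem_range.2 h)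
      · have h0 : dist (f^[q n] x) (f^[q n] y) = 0 := by
          rw [heqn (q n) (by omega), dist_self]
        have hC0 : (0 : ℝ) ≤ C := by
          have := Finset.le_sup' (fun j => dist (f^[j] x) (f^[j] y))
            (Finset.mem_range.2 (Nat.lt_succ_self m))
          exact le_trans dist_nonneg this
        rw [h0]; exact hC0
    obtain ⟨n, hn⟩ := (hq.eventually_ge_atTop (C + 1)).exists
    linarith [hbdd n]
  · -- Main case: p n → ∞.
    push_neg at hA
    have hptop : Tendsto p atTop atTop := by
      refine tendsto_atTop.2 fun b => ?_
      rw [← Nat.cofinite_eq_atTop, eventually_cofinite]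
      have hsub : {n | ¬ b ≤ p n} ⊆ ⋃ m ∈ Finset.range b, {n | p n = m} := by
        intro n hn
        simp only [Set.mem_setOf_eq, not_le] at hn
        simp only [Set.mem_iUnion, Finset.mem_range, Set.mem_setOf_eq]
        exact ⟨p n, hn, rfl⟩
      exact ((Finset.range b).finite_toSet.biUnion fun m _ => hA m).subset hsub
    -- far apart points
    obtain ⟨n0, hn0⟩ := (hq.eventually_ge_atTop 10).exists
    set a := f^[q n0] x with ha
    set b := f^[q n0] y with hb
    set C : ℕ → Set X := fun N => {z | ∀ n ≥ N, dist (f^[p n] z) (f^[p n] x) ≤ 1} with hC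
    have hsubS : S ⊆ ⋃ N, C N := by
      intro z hz
      rcases eq_or_ne z x with rfl | hzx
      · exact Set.mem_iUnion.2 ⟨0, fun n _ => by simp⟩
      · obtain ⟨hz0, -⟩ := hpq z hz x hxS hzx
        obtain ⟨N, hN⟩ := eventually_atTop.1 (hz0.eventually (ge_mem_nhds one_pos))
        exact Set.mem_iUnion.2 ⟨N, fun n hn => hN n hn⟩
    have hclosed : ∀ N, IsClosed (C N) := by
      intro N
      have : C N = ⋂ n, ⋂ (_ : n ≥ N), {z | dist (f^[p n] z) (f^[p n] x) ≤ 1} := by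
        ext z; simp [hC, Set.mem_iInter]
      rw [this]
      exact isClosed_iInter fun n => isClosed_iInter fun _ =>
        isClosed_le ((hf.iterate (p n)).dist continuous_const) continuous_const
    have hint : ∀ N, interior (C N) = ∅ := by
      intro N
      by_contra h
      obtain ⟨u, hu⟩ := Set.nonempty_iff_ne_empty.2 h
      obtain ⟨N1, hN1⟩ := hmix (interior (C N)) (ball a 1) isOpen_interior isOpen_ball
        ⟨u, hu⟩ ⟨a, mem_ball_self one_pos⟩
      obtain ⟨N2, hN2⟩ := hmix (interior (C N)) (ball b 1) isOpen_interior isOpen_ball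
        ⟨u, hu⟩ ⟨b, mem_ball_self one_pos⟩
      obtain ⟨n, hnp, hnN⟩ :=
        ((hptop.eventually_ge_atTop (max N1 N2)).and (eventually_ge_atTop N)).exists
      obtain ⟨z1, hz1U, hz1⟩ := hN1 (p n) (le_trans (le_max_left _ _) hnp)
      obtain ⟨z2, hz2U, hz2⟩ := hN2 (p n) (le_trans (le_max_right _ _) hnp)
      have h1 : dist (f^[p n] z1) (f^[p n] x) ≤ 1 := interior_subset hz1U n hnN
      have h2 : dist (f^[p n] z2) (f^[p n] x) ≤ 1 := interior_subset hz2U n hnN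
      have hb1 : dist a (f^[p n] z1) < 1 := by
        rw [dist_comm]; exact mem_ball.1 hz1
      have hb2 : dist (f^[p n] z2) b < 1 := mem_ball.1 hz2
      have htri : dist a b ≤ dist a (f^[p n] z1) + dist (f^[p n] z1) (f^[p n] z2)
          + dist (f^[p n] z2) b := dist_triangle4 _ _ _ _
      have htri2 : dist (f^[p n] z1) (f^[p n] z2) ≤ dist (f^[p n] z1) (f^[p n] x)
          + dist (f^[p n] x) (f^[p n] z2) := dist_triangle _ _ _
      rw [dist_comm (f^[p n] x)] at htri2
      linarith
    refine IsMeagre.mono hsubS (isMeagre_iUnion fun N => ?_)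
    have hdense : Dense (C N)ᶜ := interior_eq_empty_iff_dense_compl.1 (hint N)
    exact residual_of_dense_open (hclosed N).isOpen_compl hdense
end

section
/- Let X be a Banach space and T: X → X a bounded linear operator. Then T is sensitive (there exists δ > 0 such that for every x ∈ X and ε > 0 there exist y with ‖x − y‖ < ε and n ∈ ℕ with ‖T^n x − T^n y‖ > δ) if and only if sup_{n ∈ ℕ} ‖T^n‖ = ∞. -/
open Filter Topology

open Set

section

variable {ι 𝕜 E F : Type*} [NontriviallyNormedField 𝕜] [SeminormedAddCommGroup E]
  [NormedSpace 𝕜 E] [SeminormedAddCommGroup F] [NormedSpace 𝕜 F]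

def IsSensitive (A : ι → E →L[𝕜] F) : Prop :=
  ∃ δ > 0, ∀ x : E, ∀ ε > 0, ∃ y : E, ‖x - y‖ < ε ∧ ∃ i, δ < ‖A i x - A i y‖

/-- Linearity moves the estimate near `x` to the ball around `0`, and rescaling into a shell
`ε / ‖c‖ ≤ ‖h‖ < ε` turns it into a bound on the operator norms. -/
theorem bddAbove_range_opNorm_of_forall_norm_sub_lt {A : ι → E →L[𝕜] F} {x : E} {ε δ : ℝ}
    (hε : 0 < ε) (hA : ∀ y, ‖x - y‖ < ε → ∀ i, ‖A i x - A i y‖ ≤ δ) :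
    BddAbove (range fun i ↦ ‖A i‖) := by
  obtain ⟨c, hc⟩ := NormedField.exists_one_lt_norm 𝕜
  have hc₀ : 0 < ‖c‖ := one_pos.trans hc
  have hball : ∀ h : E, ‖h‖ < ε → ∀ i, ‖A i h‖ ≤ δ := fun h hh i ↦ by
    simpa [map_sub] using hA (x - h) (by simpa using hh) i
  refine ⟨δ * ‖c‖ / ε, forall_mem_range.2 fun i ↦ ?_⟩
  have hδ : 0 ≤ δ := (norm_nonneg _).trans (hball 0 (by simpa using hε) i)
  refine (A i).opNorm_le_of_shell hε (by positivity) hc fun h hlow hup ↦ ?_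
  calc ‖A i h‖ ≤ δ := hball h hup i
    _ = δ * ‖c‖ / ε * (ε / ‖c‖) := by field_simp
    _ ≤ δ * ‖c‖ / ε * ‖h‖ := by gcongr

theorem IsSensitive.not_bddAbove_range_opNorm {A : ι → E →L[𝕜] F} (hA : IsSensitive A) :
    ¬BddAbove (range fun i ↦ ‖A i‖) := by
  rintro ⟨M, hM⟩
  obtain ⟨δ, hδ, hsens⟩ := hA
  set C := max M 1
  have hC : 0 < C := lt_max_of_lt_right one_pos
  obtain ⟨y, hy, i, hi⟩ := hsens 0 (δ / C) (by positivity)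
  rw [zero_sub, norm_neg] at hy
  have hAi : ‖A i‖ ≤ C := (hM (mem_range_self i)).trans (le_max_left _ _)
  have : ‖A i y‖ < δ := calc
    ‖A i y‖ ≤ ‖A i‖ * ‖y‖ := (A i).le_opNorm y
    _ ≤ C * ‖y‖ := by gcongr
    _ < C * (δ / C) := by gcongr
    _ = δ := by field_simp
  simp only [map_zero, zero_sub, norm_neg] at hi
  linarith

theorem isSensitive_of_not_bddAbove_range_opNorm {A : ι → E →L[𝕜] F}
    (hA : ¬BddAbove (range fun i ↦ ‖A i‖)) : IsSensitive A := by
  refine ⟨1, one_pos, fun x ε hε ↦ ?_⟩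
  by_contra! h
  exact hA (bddAbove_range_opNorm_of_forall_norm_sub_lt hε h)

theorem isSensitive_iff_not_bddAbove_range_opNorm (A : ι → E →L[𝕜] F) :
    IsSensitive A ↔ ¬BddAbove (range fun i ↦ ‖A i‖) :=
  ⟨IsSensitive.not_bddAbove_range_opNorm, isSensitive_of_not_bddAbove_range_opNorm⟩
end

theorem stmt9_general {X : Type*} [NormedAddCommGroup X] [NormedSpace ℝ X]
    (T : X →L[ℝ] X) :
    (∃ δ : ℝ, 0 < δ ∧ ∀ x : X, ∀ ε > 0, ∃ y : X, ‖x - y‖ < ε ∧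
      ∃ n : ℕ, δ < ‖(T ^ n) x - (T ^ n) y‖) ↔
    (∀ M : ℝ, ∃ n : ℕ, M < ‖T ^ n‖) := by
  refine (isSensitive_iff_not_bddAbove_range_opNorm fun n : ℕ ↦ T ^ n).trans ?_
  simp only [not_bddAbove_iff, exists_range_iff]

theorem stmt9 {X : Type*} [NormedAddCommGroup X] [NormedSpace ℝ X] [CompleteSpace X]
    (T : X →L[ℝ] X) :
    (∃ δ : ℝ, 0 < δ ∧ ∀ x : X, ∀ ε > 0, ∃ y : X, ‖x - y‖ < ε ∧
      ∃ n : ℕ, δ < ‖(T ^ n) x - (T ^ n) y‖) ↔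
    (∀ M : ℝ, ∃ n : ℕ, M < ‖T ^ n‖) :=
  stmt9_general T
end

section
/- Let X be a separable Banach space and T: X → X a bounded linear operator. If sup_n ‖T^n‖ = ∞ and the set {x ∈ X : T^n x → 0} is dense in X, then for every k ≥ 2, both Prox_k(T) and D_k(T) are dense in X^k; consequently T is densely uniformly Li–Yorke chaotic. -/
open Filter Topology

section LiYorkeHelpers

variable {X : Type*} [NormedAddCommGroup X] [NormedSpace ℝ X] [CompleteSpace X]

private lemma lyAux_unbdd (T : X →L[ℝ] X)
    (hsup : ∀ M : ℝ, ∃ n : ℕ, M < ‖T ^ n‖) (m : ℕ) (c : X) {r : ℝ} (hr : 0 < r) :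
    ∃ x, dist x c < r ∧ ∃ n ≥ m, (m : ℝ) < ‖(T ^ n) x‖ := by
  by_contra hcon
  push_neg at hcon
  have hb : ∀ n, m ≤ n → ‖T ^ n‖ ≤ 4 * m / r := by
    intro n hn
    refine ContinuousLinearMap.opNorm_le_bound _ (by positivity) fun x => ?_
    rcases eq_or_ne x 0 with rfl | hx
    · simp
    have hxn : 0 < ‖x‖ := norm_pos_iff.2 hx
    set s : ℝ := r / (2 * ‖x‖) with hs
    have hspos : 0 < s := by positivity
    have h1 : dist (c + s • x) c < r := by
      rw [dist_eq_norm, add_sub_cancel_left, norm_smul, Real.norm_of_nonneg hspos.le, hs,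
        div_mul_eq_mul_div, div_lt_iff₀ (by positivity)]
      nlinarith
    have h2 : dist c c < r := by simpa using hr
    have hc1 := hcon (c + s • x) h1 n hn
    have hc2 := hcon c h2 n hn
    have key : ‖(T ^ n) (s • x)‖ ≤ 2 * m := by
      have heq : (T ^ n) (s • x) = (T ^ n) (c + s • x) - (T ^ n) c := by
        rw [map_add]; abel
      rw [heq]
      calc ‖(T ^ n) (c + s • x) - (T ^ n) c‖
          ≤ ‖(T ^ n) (c + s • x)‖ + ‖(T ^ n) c‖ := norm_sub_le _ _
        _ ≤ 2 * m := by linarith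
    have hsn : ‖(T ^ n) (s • x)‖ = s * ‖(T ^ n) x‖ := by
      rw [map_smul, norm_smul, Real.norm_of_nonneg hspos.le]
    rw [hsn, hs, div_mul_eq_mul_div, div_le_iff₀ (by positivity)] at key
    rw [div_mul_eq_mul_div, le_div_iff₀ hr]
    nlinarith [norm_nonneg ((T ^ n) x)]
  set M : ℝ := 4 * m / r + ∑ i ∈ Finset.range m, ‖T ^ i‖ with hM
  obtain ⟨n, hn⟩ := hsup M
  have hsum_nonneg : 0 ≤ ∑ i ∈ Finset.range m, ‖T ^ i‖ :=
    Finset.sum_nonneg fun _ _ => norm_nonneg _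
  have hdiv_nonneg : (0:ℝ) ≤ 4 * m / r := by positivity
  rcases le_or_gt m n with h | h
  · have := hb n h
    have : ‖T ^ n‖ ≤ M := by rw [hM]; linarith
    exact absurd hn (not_lt.2 this)
  · have hmem : n ∈ Finset.range m := Finset.mem_range.2 h
    have h1 : ‖T ^ n‖ ≤ ∑ i ∈ Finset.range m, ‖T ^ i‖ :=
      Finset.single_le_sum (fun i _ => norm_nonneg (T ^ i)) hmem
    have : ‖T ^ n‖ ≤ M := by rw [hM]; linarith
    exact absurd hn (not_lt.2 this)

private lemma lyAux_z (T : X →L[ℝ] X)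
    (hsup : ∀ M : ℝ, ∃ n : ℕ, M < ‖T ^ n‖)
    (hker : Dense {x : X | Tendsto (fun n => (T ^ n) x) atTop (𝓝 0)}) :
    ∃ z : X, (∀ ε > (0:ℝ), ∀ N : ℕ, ∃ n ≥ N, ‖(T ^ n) z‖ < ε) ∧
      (∀ M : ℝ, ∀ N : ℕ, ∃ n ≥ N, M < ‖(T ^ n) z‖) := by
  haveI : Nonempty X := ⟨0⟩
  set F : ℕ ⊕ ℕ → Set X := Sum.elim
    (fun m => {x | ∃ n ≥ m, ‖(T ^ n) x‖ < 1 / (m + 1)})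
    (fun m => {x | ∃ n ≥ m, (m : ℝ) < ‖(T ^ n) x‖}) with hF
  have hopen : ∀ i, IsOpen (F i) := by
    rintro (m | m)
    · have : F (Sum.inl m) = ⋃ n, ⋃ (_ : n ≥ m), {x : X | ‖(T ^ n) x‖ < 1 / (m + 1)} := by
        ext x; simp [hF]
      rw [this]
      exact isOpen_iUnion fun n => isOpen_iUnion fun _ =>
        isOpen_lt (continuous_norm.comp (T ^ n).continuous) continuous_const
    · have : F (Sum.inr m) = ⋃ n, ⋃ (_ : n ≥ m), {x : X | (m : ℝ) < ‖(T ^ n) x‖} := by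
        ext x; simp [hF]
      rw [this]
      exact isOpen_iUnion fun n => isOpen_iUnion fun _ =>
        isOpen_lt continuous_const (continuous_norm.comp (T ^ n).continuous)
  have hdenseF : ∀ i, Dense (F i) := by
    rintro (m | m)
    · refine hker.mono ?_
      intro x hx
      have hx' : Tendsto (fun n => (T ^ n) x) atTop (𝓝 0) := hx
      have h1 : ∀ᶠ n in atTop, ‖(T ^ n) x‖ < 1 / (m + 1) :=
        NormedAddCommGroup.tendsto_nhds_zero.1 hx' (1 / (m + 1)) (by positivity)
      have h2 : ∀ᶠ n in atTop, n ≥ m := eventually_ge_atTop m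
      obtain ⟨n, hn1, hn2⟩ := (h2.and h1).exists
      exact ⟨n, hn1, hn2⟩
    · rw [Metric.dense_iff]
      intro x r hr
      obtain ⟨y, hy, hex⟩ := lyAux_unbdd T hsup m x hr
      exact ⟨y, Metric.mem_ball.2 hy, hex⟩
  have hdense := dense_iInter_of_isOpen hopen hdenseF
  obtain ⟨z, hz⟩ := hdense.nonempty
  rw [Set.mem_iInter] at hz
  have hzG : ∀ m : ℕ, ∃ n ≥ m, ‖(T ^ n) z‖ < 1 / (m + 1) := fun m => hz (Sum.inl m)
  have hzH : ∀ m : ℕ, ∃ n ≥ m, (m : ℝ) < ‖(T ^ n) z‖ := fun m => hz (Sum.inr m)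
  refine ⟨z, ?_, ?_⟩
  · intro ε hε N
    obtain ⟨m, hm⟩ := exists_nat_one_div_lt hε
    obtain ⟨n, hn, h⟩ := hzG (max N m)
    refine ⟨n, le_trans (le_max_left _ _) hn, ?_⟩
    have hcast : (m : ℝ) ≤ ((max N m : ℕ) : ℝ) := Nat.cast_le.2 (le_max_right N m)
    have : (1 : ℝ) / ((max N m : ℕ) + 1) ≤ 1 / (m + 1) :=
      one_div_le_one_div_of_le (by positivity) (by linarith)
    linarith
  · intro M N
    obtain ⟨n, hn, h⟩ := hzH (max N ⌈M⌉₊)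
    refine ⟨n, le_trans (le_max_left _ _) hn, lt_of_le_of_lt ?_ h⟩
    calc M ≤ (⌈M⌉₊ : ℝ) := Nat.le_ceil M
      _ ≤ ((max N ⌈M⌉₊ : ℕ) : ℝ) := Nat.cast_le.2 (le_max_right _ _)

end LiYorkeHelpers

theorem stmt10 {X : Type*} [NormedAddCommGroup X] [NormedSpace ℝ X] [CompleteSpace X]
    [TopologicalSpace.SeparableSpace X]
    (T : X →L[ℝ] X)
    (hsup : ∀ M : ℝ, ∃ n : ℕ, M < ‖T ^ n‖)
    (hker : Dense {x : X | Tendsto (fun n => (T ^ n) x) atTop (𝓝 0)}) :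
    (∀ k : ℕ, 2 ≤ k →
      Dense {x : Fin k → X |
        ∀ ε > 0, ∃ᶠ n in atTop, ∀ i j : Fin k, i < j →
          ‖(T ^ n) (x i) - (T ^ n) (x j)‖ < ε} ∧
      Dense {x : Fin k → X |
        ∀ M : ℝ, ∃ᶠ n in atTop, ∀ i j : Fin k, i < j →
          M < ‖(T ^ n) (x i) - (T ^ n) (x j)‖}) ∧
    ∃ (S : Set X) (p q : ℕ → ℕ), Dense S ∧ ¬ S.Countable ∧
      ∀ x ∈ S, ∀ y ∈ S, x ≠ y →
        Tendsto (fun n => ‖(T ^ p n) (x - y)‖) atTop (𝓝 0) ∧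
        Tendsto (fun n => ‖(T ^ q n) (x - y)‖) atTop atTop := by
  classical
  haveI : Nonempty X := ⟨0⟩
  set A := {x : X | Tendsto (fun n => (T ^ n) x) atTop (𝓝 0)} with hA
  have hAsub : ∀ a ∈ A, ∀ b ∈ A, a - b ∈ A := by
    intro a ha b hb
    have ha' : Tendsto (fun n => (T ^ n) a) atTop (𝓝 0) := ha
    have hb' : Tendsto (fun n => (T ^ n) b) atTop (𝓝 0) := hb
    have : Tendsto (fun n => (T ^ n) (a - b)) atTop (𝓝 0) := by
      simpa [map_sub] using ha'.sub hb'
    exact this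
  have hAev : ∀ a ∈ A, ∀ ε > (0:ℝ), ∀ᶠ n in atTop, ‖(T ^ n) a‖ < ε := by
    intro a ha ε hε
    have ha' : Tendsto (fun n => (T ^ n) a) atTop (𝓝 0) := ha
    exact NormedAddCommGroup.tendsto_nhds_zero.1 ha' ε hε
  obtain ⟨z, hp', hq'⟩ := lyAux_z T hsup hker
  have hz0 : z ≠ 0 := by
    obtain ⟨n, -, h⟩ := hq' 0 0
    intro h0
    rw [h0] at h
    simp at h
  constructor
  · intro k _
    constructor
    · -- Prox_k is dense
      have hsub : {x : Fin k → X | ∀ i, x i ∈ A} ⊆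
          {x : Fin k → X | ∀ ε > 0, ∃ᶠ n in atTop, ∀ i j : Fin k, i < j →
            ‖(T ^ n) (x i) - (T ^ n) (x j)‖ < ε} := by
        intro x hx ε hε
        have hev : ∀ᶠ n in atTop, ∀ i : Fin k, ‖(T ^ n) (x i)‖ < ε / 2 :=
          eventually_all.2 fun i => hAev _ (hx i) _ (half_pos hε)
        refine hev.frequently.mono ?_
        intro n hn i j _
        calc ‖(T ^ n) (x i) - (T ^ n) (x j)‖
            ≤ ‖(T ^ n) (x i)‖ + ‖(T ^ n) (x j)‖ := norm_sub_le _ _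
          _ < ε := by linarith [hn i, hn j]
      refine Dense.mono hsub ?_
      rw [Metric.dense_iff]
      intro y r hr
      choose a haA had using fun i : Fin k => hker.exists_dist_lt (y i) hr
      refine ⟨a, Metric.mem_ball.2 ?_, haA⟩
      rw [dist_pi_lt_iff hr]
      intro i
      rw [dist_comm]
      exact had i
    · -- D_k is dense
      rw [Metric.dense_iff]
      intro y r hr
      choose a haA had using fun i : Fin k => hker.exists_dist_lt (y i) (half_pos hr)
      set δ : ℝ := r / (2 * (k + 1) * (‖z‖ + 1)) with hδ
      have hδpos : 0 < δ := by positivity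
      have hkey : δ * ((k:ℝ) + 1) * (‖z‖ + 1) = r / 2 := by
        rw [hδ]; field_simp
      set x : Fin k → X := fun i => a i + (((i : ℕ) : ℝ) * δ) • z with hx
      refine ⟨x, Metric.mem_ball.2 ?_, ?_⟩
      · rw [dist_pi_lt_iff hr]
        intro i
        have h1 : dist (x i) (a i) = ((i : ℕ) : ℝ) * δ * ‖z‖ := by
          rw [hx]
          simp only []
          rw [dist_eq_norm, add_sub_cancel_left, norm_smul, Real.norm_of_nonneg (by positivity)]
        have hik : ((i : ℕ) : ℝ) ≤ (k : ℝ) := by exact_mod_cast i.2.le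
        have hznn : (0:ℝ) ≤ ‖z‖ := norm_nonneg z
        have h2 : ((i : ℕ) : ℝ) * δ * ‖z‖ < r / 2 := by
          have e1 : ((i : ℕ) : ℝ) * δ * ‖z‖ ≤ (k : ℝ) * δ * ‖z‖ :=
            mul_le_mul_of_nonneg_right (mul_le_mul_of_nonneg_right hik hδpos.le) hznn
          have e2 : (k : ℝ) * δ * ‖z‖ < δ * ((k : ℝ) + 1) * (‖z‖ + 1) := by
            nlinarith [mul_nonneg hδpos.le (show (0:ℝ) ≤ (k : ℝ) from Nat.cast_nonneg k),
              mul_nonneg hδpos.le hznn, hδpos]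
          linarith [e1, e2, hkey]
        calc dist (x i) (y i) ≤ dist (x i) (a i) + dist (a i) (y i) := dist_triangle _ _ _
          _ = ((i : ℕ) : ℝ) * δ * ‖z‖ + dist (y i) (a i) := by rw [h1, dist_comm]
          _ < r / 2 + r / 2 := by have := had i; linarith
          _ = r := by ring
      · intro M
        rw [frequently_atTop]
        intro N
        have hev : ∀ᶠ n in atTop, ∀ i j : Fin k, ‖(T ^ n) (a i) - (T ^ n) (a j)‖ < 1 := by
          refine eventually_all.2 fun i => eventually_all.2 fun j => ?_
          have hmem : a i - a j ∈ A := hAsub _ (haA i) _ (haA j)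
          have := hAev _ hmem 1 one_pos
          simpa [map_sub] using this
        obtain ⟨N₁, hN₁⟩ := eventually_atTop.1 hev
        obtain ⟨n, hn, hzn⟩ := hq' ((M + 1) / δ) (max N N₁)
        refine ⟨n, le_trans (le_max_left _ _) hn, ?_⟩
        intro i j hij
        have hsmall := hN₁ n (le_trans (le_max_right _ _) hn) i j
        have hdiff : (T ^ n) (x i) - (T ^ n) (x j)
            = ((T ^ n) (a i) - (T ^ n) (a j))
              + ((((i : ℕ) : ℝ) - ((j : ℕ) : ℝ)) * δ) • ((T ^ n) z) := by
          simp only [hx, map_add, map_smul]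
          rw [sub_mul, sub_smul]
          abel
        have hone : 1 ≤ |((i : ℕ) : ℝ) - ((j : ℕ) : ℝ)| := by
          have hlt : (i : ℕ) < (j : ℕ) := hij
          have h1 : ((i : ℕ) : ℝ) + 1 ≤ ((j : ℕ) : ℝ) := by exact_mod_cast hlt
          rw [abs_sub_comm]
          calc (1:ℝ) ≤ ((j : ℕ) : ℝ) - ((i : ℕ) : ℝ) := by linarith
            _ ≤ |((j : ℕ) : ℝ) - ((i : ℕ) : ℝ)| := le_abs_self _
        have hMδ : M + 1 < δ * ‖(T ^ n) z‖ := by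
          rw [div_lt_iff₀ hδpos] at hzn
          linarith [hzn]
        have hnorm : ‖((((i : ℕ) : ℝ) - ((j : ℕ) : ℝ)) * δ) • ((T ^ n) z)‖
            = |((i : ℕ) : ℝ) - ((j : ℕ) : ℝ)| * δ * ‖(T ^ n) z‖ := by
          rw [norm_smul, Real.norm_eq_abs, abs_mul, abs_of_pos hδpos]
        have hlow : ‖((((i : ℕ) : ℝ) - ((j : ℕ) : ℝ)) * δ) • ((T ^ n) z)‖
              - ‖(T ^ n) (a i) - (T ^ n) (a j)‖
            ≤ ‖(T ^ n) (x i) - (T ^ n) (x j)‖ := by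
          rw [hdiff]
          set u := (T ^ n) (a i) - (T ^ n) (a j) with hu
          set v := ((((i : ℕ) : ℝ) - ((j : ℕ) : ℝ)) * δ) • ((T ^ n) z) with hv
          have hveq : v = (u + v) - u := by abel
          have htri : ‖v‖ ≤ ‖u + v‖ + ‖u‖ := by
            calc ‖v‖ = ‖(u + v) - u‖ := by rw [← hveq]
              _ ≤ ‖u + v‖ + ‖u‖ := norm_sub_le _ _
          linarith
        rw [hnorm] at hlow
        have hmono : δ * ‖(T ^ n) z‖
            ≤ |((i : ℕ) : ℝ) - ((j : ℕ) : ℝ)| * δ * ‖(T ^ n) z‖ := by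
          nlinarith [mul_nonneg (mul_nonneg (sub_nonneg.2 hone) hδpos.le)
            (norm_nonneg ((T ^ n) z))]
        linarith
  · -- dense uniform Li-Yorke chaos
    haveI : SecondCountableTopology X :=
      UniformSpace.secondCountable_of_separable X
    obtain ⟨Dset, hDsubA, hDc, hDd⟩ := hker.exists_countable_dense_subset
    obtain ⟨D, hD⟩ := hDc.exists_eq_range hDd.nonempty
    have hDA : ∀ n, D n ∈ A := fun n => hDsubA (hD ▸ Set.mem_range_self n)
    have hDdense : DenseRange D := by
      rw [DenseRange, ← hD]; exact hDd
    obtain ⟨m₀, hm₀⟩ := pow_unbounded_of_one_lt (2 * (‖z‖ + 1)) (by norm_num : (1:ℝ) < 4)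
    set ρ : ℕ × ℕ → ℝ := fun pr => (1/4 : ℝ) ^ (Nat.pair pr.1 pr.2 + m₀) with hρ
    have hρpos : ∀ pr, 0 < ρ pr := fun pr => by
      simp only [hρ]; positivity
    have hρbound : ∀ pr : ℕ × ℕ, 2 * ρ pr * (‖z‖ + 1) < (1/2 : ℝ) ^ pr.2 := by
      intro pr
      have h1 : ρ pr = (1/4 : ℝ) ^ (Nat.pair pr.1 pr.2) * (1/4 : ℝ) ^ m₀ := by
        simp only [hρ]; rw [pow_add]
      have h2 : (2 * (‖z‖ + 1)) * (1/4 : ℝ) ^ m₀ < 1 := by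
        rw [div_pow, one_pow, mul_one_div, div_lt_one (by positivity)]
        exact hm₀
      have h3 : (1/4 : ℝ) ^ (Nat.pair pr.1 pr.2) ≤ (1/2 : ℝ) ^ pr.2 := by
        calc (1/4 : ℝ) ^ (Nat.pair pr.1 pr.2) ≤ (1/4 : ℝ) ^ pr.2 :=
            pow_le_pow_of_le_one (by norm_num) (by norm_num) (Nat.right_le_pair _ _)
          _ ≤ (1/2 : ℝ) ^ pr.2 := pow_le_pow_left₀ (by norm_num) (by norm_num) _
      have hpairpos : (0:ℝ) < (1/4 : ℝ) ^ (Nat.pair pr.1 pr.2) := by positivity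
      calc 2 * ρ pr * (‖z‖ + 1)
          = (1/4 : ℝ) ^ (Nat.pair pr.1 pr.2) * ((2 * (‖z‖ + 1)) * (1/4 : ℝ) ^ m₀) := by
            rw [h1]; ring
        _ < (1/4 : ℝ) ^ (Nat.pair pr.1 pr.2) * 1 := by
            exact mul_lt_mul_of_pos_left h2 hpairpos
        _ ≤ (1/2 : ℝ) ^ pr.2 := by rw [mul_one]; exact h3
    set S : Set X := ⋃ pr : ℕ × ℕ, (fun t : ℝ => D pr.1 + t • z) '' Set.Ioo (ρ pr) (2 * ρ pr)
      with hS
    -- separation of parameter intervals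
    have hsep : ∀ pr pr' : ℕ × ℕ, pr ≠ pr' →
        ∀ t ∈ Set.Ioo (ρ pr) (2 * ρ pr), ∀ t' ∈ Set.Ioo (ρ pr') (2 * ρ pr'), t ≠ t' := by
      have key : ∀ e e' : ℕ, e < e' → ∀ t t' : ℝ,
          (1/4 : ℝ) ^ e < t → t' < 2 * (1/4 : ℝ) ^ e' → t' < t := by
        intro e e' h t t' ht ht'
        have h4 : (1/4 : ℝ) ^ e' ≤ (1/4 : ℝ) ^ (e + 1) :=
          pow_le_pow_of_le_one (by norm_num) (by norm_num) h
        rw [pow_succ] at h4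
        nlinarith [pow_pos (show (0:ℝ) < 1/4 by norm_num) e]
      intro pr pr' hne t ht t' ht'
      simp only [hρ] at ht ht'
      have hpne : Nat.pair pr.1 pr.2 + m₀ ≠ Nat.pair pr'.1 pr'.2 + m₀ := by
        intro h
        rw [add_left_inj] at h
        obtain ⟨h1, h2⟩ := Nat.pair_eq_pair.1 h
        exact hne (Prod.ext h1 h2)
      rcases lt_or_gt_of_ne hpne with h | h
      · intro heq
        have := key _ _ h t t' ht.1 (heq ▸ ht'.2)
        rw [heq] at this
        exact lt_irrefl _ this
      · intro heq
        have := key _ _ h t' t ht'.1 (heq ▸ ht.2)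
        rw [heq] at this
        exact lt_irrefl _ this
    -- S is not countable
    have hSun : ¬ S.Countable := by
      intro hc
      have hsub : (fun t : ℝ => D (0,0).1 + t • z) '' Set.Ioo (ρ (0,0)) (2 * ρ (0,0)) ⊆ S := by
        rw [hS]
        exact Set.subset_iUnion
          (fun pr : ℕ × ℕ => (fun t : ℝ => D pr.1 + t • z) '' Set.Ioo (ρ pr) (2 * ρ pr)) (0,0)
      have hinj : Function.Injective (fun t : ℝ => D (0,0).1 + t • z) := by
        intro s t h
        simp only [add_right_inj] at h
        exact smul_left_injective ℝ hz0 h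
      have hcount : (Set.Ioo (ρ (0,0)) (2 * ρ (0,0))).Countable := by
        have := (hc.mono hsub).preimage hinj
        exact this.mono (Set.subset_preimage_image _ _)
      have hlt : ρ (0,0) < 2 * ρ (0,0) := by nlinarith [hρpos (0,0)]
      have hmk := Cardinal.mk_Ioo_real hlt
      have hle := hcount.le_aleph0
      rw [hmk] at hle
      exact absurd hle (not_le.2 Cardinal.aleph0_lt_continuum)
    -- S is dense
    have hSd : Dense S := by
      rw [Metric.dense_iff]
      intro x r hr
      obtain ⟨i, hi⟩ := hDdense.exists_dist_lt x (half_pos hr)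
      obtain ⟨m, hm⟩ := exists_pow_lt_of_lt_one (half_pos hr) (by norm_num : (1/2 : ℝ) < 1)
      have hρp := hρpos (i, m)
      have htIoo : (3/2 : ℝ) * ρ (i, m) ∈ Set.Ioo (ρ (i, m)) (2 * ρ (i, m)) :=
        ⟨by nlinarith, by nlinarith⟩
      refine ⟨D i + ((3/2 : ℝ) * ρ (i, m)) • z, Metric.mem_ball.2 ?_,
        Set.mem_iUnion.2 ⟨(i, m), Set.mem_image_of_mem _ htIoo⟩⟩
      have hb := hρbound (i, m)
      have hznn : (0:ℝ) ≤ ‖z‖ := norm_nonneg z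
      calc dist (D i + ((3/2 : ℝ) * ρ (i, m)) • z) x
          ≤ dist (D i + ((3/2 : ℝ) * ρ (i, m)) • z) (D i) + dist (D i) x := dist_triangle _ _ _
        _ = (3/2 : ℝ) * ρ (i, m) * ‖z‖ + dist x (D i) := by
            rw [dist_eq_norm, add_sub_cancel_left, norm_smul,
              Real.norm_of_nonneg (by positivity), dist_comm]
        _ < r / 2 + r / 2 := by
            have : (3/2 : ℝ) * ρ (i, m) * ‖z‖ ≤ 2 * ρ (i, m) * (‖z‖ + 1) := by nlinarith
            have h5 : (3/2 : ℝ) * ρ (i, m) * ‖z‖ < (1/2 : ℝ) ^ m := lt_of_le_of_lt this hb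
            linarith [hm, hi]
        _ = r := by ring
    -- differences of elements of S
    have hdiffS : ∀ x ∈ S, ∀ y ∈ S, x ≠ y →
        ∃ (w : X) (c : ℝ), w ∈ A ∧ c ≠ 0 ∧ x - y = w + c • z := by
      intro x hx y hy hxy
      rw [hS, Set.mem_iUnion] at hx hy
      obtain ⟨pr, hximg⟩ := hx
      obtain ⟨pr', hyimg⟩ := hy
      rw [Set.mem_image] at hximg hyimg
      obtain ⟨t, htI, rfl⟩ := hximg
      obtain ⟨t', htI', rfl⟩ := hyimg
      have htne : t ≠ t' := by
        rcases eq_or_ne pr pr' with rfl | hne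
        · intro h
          exact hxy (by rw [h])
        · exact hsep pr pr' hne t htI t' htI'
      refine ⟨D pr.1 - D pr'.1, t - t', hAsub _ (hDA _) _ (hDA _), sub_ne_zero.2 htne, ?_⟩
      rw [sub_smul]
      abel
    -- sequences p and q
    have hpc : ∀ n : ℕ, ∃ k ≥ n, ‖(T ^ k) z‖ < 1 / (n + 1) :=
      fun n => hp' (1 / (n + 1)) (by positivity) n
    choose p hp1 hp2 using hpc
    have hqc : ∀ n : ℕ, ∃ k ≥ n, (n : ℝ) < ‖(T ^ k) z‖ := fun n => hq' n n
    choose q hq1 hq2 using hqc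
    have hpT : Tendsto p atTop atTop := tendsto_atTop_mono hp1 tendsto_id
    have hqT : Tendsto q atTop atTop := tendsto_atTop_mono hq1 tendsto_id
    refine ⟨S, p, q, hSd, hSun, ?_⟩
    intro x hx y hy hxy
    obtain ⟨w, c, hw, hc, hxyeq⟩ := hdiffS x hx y hy hxy
    have hw' : Tendsto (fun n => (T ^ n) w) atTop (𝓝 0) := hw
    have hcabs : 0 < |c| := abs_pos.2 hc
    constructor
    · -- proximality along p
      have hwp : Tendsto (fun n => ‖(T ^ p n) w‖) atTop (𝓝 0) := by
        have := (hw'.comp hpT).norm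
        simpa using this
      refine squeeze_zero (fun n => norm_nonneg _)
        (g := fun n : ℕ => ‖(T ^ p n) w‖ + |c| * (1 / (n + 1))) ?_ ?_
      · intro n
        rw [hxyeq, map_add, map_smul]
        calc ‖(T ^ p n) w + c • (T ^ p n) z‖
            ≤ ‖(T ^ p n) w‖ + ‖c • (T ^ p n) z‖ := norm_add_le _ _
          _ ≤ ‖(T ^ p n) w‖ + |c| * (1 / (n + 1)) := by
              rw [norm_smul, Real.norm_eq_abs]
              have := mul_le_mul_of_nonneg_left (le_of_lt (hp2 n)) (abs_nonneg c)
              linarith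
      · have h2 : Tendsto (fun n : ℕ => |c| * (1 / ((n : ℝ) + 1))) atTop (𝓝 0) := by
          have := tendsto_one_div_add_atTop_nhds_zero_nat.const_mul |c|
          simpa using this
        simpa using hwp.add h2
    · -- divergence along q
      have hwq : Tendsto (fun n => ‖(T ^ q n) w‖) atTop (𝓝 0) := by
        have := (hw'.comp hqT).norm
        simpa using this
      have hev : ∀ᶠ n in atTop, ‖(T ^ q n) w‖ < 1 :=
        hwq.eventually_lt_const one_pos
      refine tendsto_atTop_mono' atTop
        (show ∀ᶠ n : ℕ in atTop, |c| * (n : ℝ) - 1 ≤ ‖(T ^ q n) (x - y)‖ from ?_) ?_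
      · filter_upwards [hev] with n hn
        rw [hxyeq, map_add, map_smul]
        have hlow := norm_sub_norm_le (c • (T ^ q n) z) (-((T ^ q n) w))
        rw [sub_neg_eq_add, norm_neg] at hlow
        have h1 : |c| * (n : ℝ) ≤ ‖c • (T ^ q n) z‖ := by
          rw [norm_smul, Real.norm_eq_abs]
          exact mul_le_mul_of_nonneg_left (le_of_lt (hq2 n)) (abs_nonneg c)
        have heq : c • (T ^ q n) z + (T ^ q n) w = (T ^ q n) w + c • (T ^ q n) z := by abel
        rw [heq] at hlow
        linarith
      · have h1 : Tendsto (fun n : ℕ => |c| * (n : ℝ)) atTop atTop :=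
          (tendsto_natCast_atTop_atTop).const_mul_atTop hcabs
        have := tendsto_atTop_add_const_right atTop (-1 : ℝ) h1
        simpa [sub_eq_add_neg] using this
end

section
/- Let X be a Banach space and T: X → X a bounded linear operator with dense generalized kernel ⋃_{n∈ℕ} ker(T^n). Then T is sensitive if and only if for every k ≥ 2 the set D_k(T) is dense in X^k. -/
open Filter Topology

private lemma stmt11_kernel_mono {X : Type*} [NormedAddCommGroup X] [NormedSpace ℝ X]
    (T : X →L[ℝ] X) {m N : ℕ} (h : m ≤ N) {z : X} (hz : (T ^ m) z = 0) :
    (T ^ N) z = 0 := by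
  obtain ⟨d, rfl⟩ := Nat.exists_eq_add_of_le h
  rw [add_comm, pow_add, ContinuousLinearMap.mul_apply, hz, map_zero]

private lemma stmt11_orbit_bound {X : Type*} [NormedAddCommGroup X] [NormedSpace ℝ X]
    (T : X →L[ℝ] X) (w : X) (M : ℝ) (N : ℕ) (h : ∀ n, N ≤ n → ‖(T ^ n) w‖ ≤ M) :
    ∃ C, ∀ n, ‖(T ^ n) w‖ ≤ C := by
  refine ⟨max M ((Finset.range (N+1)).sup' ⟨0, by simp⟩ fun n => ‖(T ^ n) w‖), fun n => ?_⟩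
  rcases le_or_gt N n with hn | hn
  · exact le_max_of_le_left (h n hn)
  · exact le_max_of_le_right (Finset.le_sup' (fun n => ‖(T ^ n) w‖)
      (Finset.mem_range.2 (Nat.lt_succ_of_lt hn)))

theorem stmt11 {X : Type*} [NormedAddCommGroup X] [NormedSpace ℝ X] [CompleteSpace X]
    (T : X →L[ℝ] X)
    (hker : Dense (⋃ n : ℕ, {x : X | (T ^ n) x = 0})) :
    (∃ δ : ℝ, 0 < δ ∧ ∀ x : X, ∀ ε > 0, ∃ y : X, ‖x - y‖ < ε ∧
      ∃ n : ℕ, δ < ‖(T ^ n) x - (T ^ n) y‖) ↔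
    (∀ k : ℕ, 2 ≤ k →
      Dense {x : Fin k → X |
        ∀ M : ℝ, ∃ᶠ n in atTop, ∀ i j : Fin k, i < j →
          M < ‖(T ^ n) (x i) - (T ^ n) (x j)‖}) := by
  constructor
  · -- forward direction
    rintro ⟨δ, hδ, hsens⟩
    -- step 1: get a vector with frequently unbounded orbit
    have hw : ∃ w : X, ∀ M : ℝ, ∃ᶠ n in atTop, M < ‖(T ^ n) w‖ := by
      by_contra hc
      push_neg at hc
      have hbdd : ∀ x : X, ∃ C, ∀ n : ℕ, ‖(T ^ n) x‖ ≤ C := by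
        intro x
        obtain ⟨M, hM⟩ := hc x
        obtain ⟨N, hN⟩ := eventually_atTop.mp hM
        exact stmt11_orbit_bound T x M N hN
      obtain ⟨C, hC⟩ := banach_steinhaus (g := fun n : ℕ => T ^ n) hbdd
      have hCpos : (0:ℝ) ≤ C := le_trans (norm_nonneg _) (hC 0)
      obtain ⟨y, hy, n, hn⟩ := hsens 0 (δ / (C + 1)) (by positivity)
      have h1 : ‖(T ^ n) 0 - (T ^ n) y‖ ≤ C * ‖y‖ := by
        rw [map_zero, zero_sub, norm_neg]
        exact le_trans ((T ^ n).le_opNorm y) (by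
          have := hC n; nlinarith [norm_nonneg y])
      have h2 : ‖y‖ < δ / (C + 1) := by simpa using hy
      have : δ < C * (δ / (C + 1)) := by
        nlinarith [norm_nonneg y, mul_le_mul_of_nonneg_left h2.le hCpos]
      have hlt : C * (δ / (C + 1)) < δ := by
        rw [mul_div_assoc'] at *
        rw [div_lt_iff₀ (by linarith)]
        nlinarith
      linarith
    obtain ⟨w, hw⟩ := hw
    -- step 2: density
    intro k hk
    rw [Metric.dense_iff]
    intro x ε hε
    -- approximate by kernel vectors
    have hz : ∀ i : Fin k, ∃ z : X, (∃ m : ℕ, (T ^ m) z = 0) ∧ dist z (x i) < ε / 2 := by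
      intro i
      obtain ⟨z, hz1, hz2⟩ := Metric.dense_iff.mp hker (x i) (ε / 2) (by positivity)
      obtain ⟨m, hm⟩ := Set.mem_iUnion.mp hz2
      exact ⟨z, ⟨m, hm⟩, Metric.mem_ball.mp hz1⟩
    choose z hz1 hz2 using hz
    choose m hm using hz1
    set N : ℕ := Finset.univ.sup m with hN
    have hzN : ∀ i, (T ^ N) (z i) = 0 := fun i =>
      stmt11_kernel_mono T (Finset.le_sup (Finset.mem_univ i)) (hm i)
    -- scaling
    set s : ℝ := ε / (2 * k * (‖w‖ + 1)) with hs
    have hkpos : (0:ℝ) < k := by positivity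
    have hspos : 0 < s := by
      have : (0:ℝ) < k := hkpos
      positivity
    set y : Fin k → X := fun i => z i + (((i : ℕ) : ℝ) + 1) • (s • w) with hy
    refine ⟨y, Metric.mem_ball.mpr ?_, ?_⟩
    · rw [dist_pi_lt_iff hε]
      intro i
      have hi1 : ((i : ℕ) : ℝ) + 1 ≤ (k : ℝ) := by
        have := i.isLt
        exact_mod_cast this
      have hnorm : ‖(((i : ℕ) : ℝ) + 1) • (s • w)‖ < ε / 2 := by
        rw [norm_smul, norm_smul, Real.norm_eq_abs, Real.norm_eq_abs,
          abs_of_nonneg (by positivity : (0:ℝ) ≤ ((i : ℕ) : ℝ) + 1),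
          abs_of_pos hspos]
        calc (((i : ℕ) : ℝ) + 1) * (s * ‖w‖) ≤ (k : ℝ) * (s * ‖w‖) := by
              apply mul_le_mul_of_nonneg_right hi1 (by positivity)
          _ < (k : ℝ) * (s * (‖w‖ + 1)) := by
              apply mul_lt_mul_of_pos_left _ hkpos
              exact mul_lt_mul_of_pos_left (by linarith) hspos
          _ = ε / 2 := by
              rw [hs]; field_simp
      calc dist (y i) (x i) ≤ dist (y i) (z i) + dist (z i) (x i) := dist_triangle _ _ _
        _ < ε / 2 + ε / 2 := by
            apply add_lt_add _ (hz2 i)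
            rw [hy, dist_eq_norm]
            simpa using hnorm
        _ = ε := by ring
    · -- membership in D_k
      intro M
      have hfreq := (hw ((max M 0) / s)).and_eventually (eventually_ge_atTop N)
      refine hfreq.mono ?_
      rintro n ⟨hn1, hn2⟩ i j hij
      have hTz : ∀ l : Fin k, (T ^ n) (z l) = 0 := fun l =>
        stmt11_kernel_mono T hn2 (hzN l)
      have heq : (T ^ n) (y i) - (T ^ n) (y j)
          = ((((i : ℕ) : ℝ)) - ((j : ℕ) : ℝ)) • (s • (T ^ n) w) := by
        rw [hy]
        simp only [map_add, map_smul, hTz, zero_add]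
        rw [← sub_smul]
        ring_nf
      rw [heq]
      rw [norm_smul, norm_smul, Real.norm_eq_abs, Real.norm_eq_abs, abs_of_pos hspos]
      have hij1 : (1:ℝ) ≤ |(((i : ℕ) : ℝ)) - ((j : ℕ) : ℝ)| := by
        have hlt : ((i : ℕ) : ℝ) + 1 ≤ ((j : ℕ) : ℝ) := by
          have : (i : ℕ) < (j : ℕ) := hij
          exact_mod_cast this
        rw [abs_sub_comm, abs_of_nonneg (by linarith)]
        linarith
      have hsw : max M 0 < s * ‖(T ^ n) w‖ := by
        rw [div_lt_iff₀ hspos] at hn1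
        linarith [hn1]
      calc M ≤ max M 0 := le_max_left _ _
        _ < s * ‖(T ^ n) w‖ := hsw
        _ ≤ |(((i : ℕ) : ℝ)) - ((j : ℕ) : ℝ)| * (s * ‖(T ^ n) w‖) :=
            le_mul_of_one_le_left (by positivity) hij1
  · -- reverse direction
    intro hD
    refine ⟨1, one_pos, fun x ε hε => ?_⟩
    obtain ⟨y, hy1, hy2⟩ := Metric.dense_iff.mp (hD 2 le_rfl) (fun _ => x) ε hε
    rw [Metric.mem_ball, dist_pi_lt_iff hε] at hy1
    obtain ⟨n, hn⟩ := ((hy2 2).and_eventually (eventually_ge_atTop 0)).exists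
    have h01 : (0 : Fin 2) < 1 := by decide
    have hbig := hn.1 0 1 h01
    by_cases hcase : 1 < ‖(T ^ n) x - (T ^ n) (y 0)‖
    · refine ⟨y 0, ?_, n, hcase⟩
      have := hy1 0; rw [dist_comm] at this; rwa [← dist_eq_norm]
    · refine ⟨y 1, ?_, n, ?_⟩
      · have := hy1 1; rw [dist_comm] at this; rwa [← dist_eq_norm]
      · push_neg at hcase
        have htri : ‖(T ^ n) (y 0) - (T ^ n) (y 1)‖ ≤
            ‖(T ^ n) (y 0) - (T ^ n) x‖ + ‖(T ^ n) x - (T ^ n) (y 1)‖ :=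
          norm_sub_le_norm_sub_add_norm_sub _ _ _
        have h0 : ‖(T ^ n) (y 0) - (T ^ n) x‖ ≤ 1 := by
          rwa [norm_sub_rev]
        linarith
end

section
/- Let B_w be the unilateral backward weighted shift on ℓ^p(ℕ), 1 ≤ p < ∞, with bounded non-zero weights {w_j}. If sup_{k,n∈ℕ} ∏_{j=k+1}^{n+k+1} |w_j| = ∞, then B_w is densely uniformly Li–Yorke chaotic: there exists a dense uncountable set S ⊆ ℓ^p(ℕ) and sequences {p_n}, {q_n} in ℕ so that for distinct x, y ∈ S, ‖B_w^{p_n}(x−y)‖ → 0 and ‖B_w^{q_n}(x−y)‖ → ∞. -/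
set_option maxHeartbeats 4000000


open Filter Topology

private lemma aux_prodle (w : ℕ → ℝ) (C : ℝ) (hC0 : 0 ≤ C) (hCw : ∀ j, |w j| ≤ C) (a q : ℕ) :
    ∏ j ∈ Finset.Icc (a + 1) (a + q), |w j| ≤ C ^ q := by
  calc ∏ j ∈ Finset.Icc (a + 1) (a + q), |w j|
      ≤ ∏ _j ∈ Finset.Icc (a + 1) (a + q), C :=
        Finset.prod_le_prod (fun j _ => abs_nonneg _) (fun j _ => hCw j)
    _ = C ^ (Finset.Icc (a + 1) (a + q)).card := by rw [Finset.prod_const]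
    _ = C ^ q := by rw [Nat.card_Icc]; congr 1; omega

private lemma aux_seq (w : ℕ → ℝ) (C : ℝ) (hC1 : 1 < C) (hCw : ∀ j, |w j| ≤ C)
    (hsup : ∀ M : ℝ, ∃ k n : ℕ, M < ∏ j ∈ Finset.Icc (k + 1) (n + k + 1), |w j|) :
    ∃ s q : ℕ → ℕ, s 0 = 0 ∧ (∀ m, q m ≤ s (m + 1)) ∧ (∀ m, s m + 1 < q m) ∧
      ∀ m : ℕ, ((m + 1 : ℝ) * 2 ^ m * C ^ (s m + 1) + C ^ (s m + 1)) <
        ∏ j ∈ Finset.Icc (s (m + 1) - q m + 1) (s (m + 1)), |w j| := by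
  have hC0 : (0:ℝ) < C := lt_trans one_pos hC1
  choose kf nf hkn using hsup
  set M : ℕ → ℕ → ℝ := fun m sm => (m + 1 : ℝ) * 2 ^ m * C ^ (sm + 1) + C ^ (sm + 1) with hM
  set F : ℕ → ℕ × ℕ := fun m => Nat.rec ((0:ℕ), (0:ℕ))
    (fun m' prev => (kf (M m' prev.1) + nf (M m' prev.1) + 1, nf (M m' prev.1) + 1)) m with hF
  have hstep : ∀ m, F (m + 1) =
      (kf (M m (F m).1) + nf (M m (F m).1) + 1, nf (M m (F m).1) + 1) := fun m => rfl
  have hq_le : ∀ m, (F (m + 1)).2 ≤ (F (m + 1)).1 := by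
    intro m; rw [hstep m]; simp
  have hprod : ∀ m, M m (F m).1 <
      ∏ j ∈ Finset.Icc ((F (m + 1)).1 - (F (m + 1)).2 + 1) ((F (m + 1)).1), |w j| := by
    intro m
    have h := hkn (M m (F m).1)
    have e3 : (F (m + 1)).1 - (F (m + 1)).2 + 1 = kf (M m (F m).1) + 1 := by
      rw [hstep m]; simp
    have e4 : (F (m + 1)).1 = nf (M m (F m).1) + kf (M m (F m).1) + 1 := by
      rw [hstep m]; simp; omega
    rw [e3, e4]
    exact h
  have hMgt : ∀ m, C ^ ((F m).1 + 1) < M m (F m).1 := by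
    intro m
    have h1 : (0:ℝ) < (m + 1 : ℝ) * 2 ^ m * C ^ ((F m).1 + 1) := by positivity
    simp only [hM]
    linarith
  have hsq : ∀ m, (F m).1 + 1 < (F (m + 1)).2 := by
    intro m
    have h2 := hprod m
    have h3 : ∏ j ∈ Finset.Icc ((F (m + 1)).1 - (F (m + 1)).2 + 1) ((F (m + 1)).1), |w j|
        ≤ C ^ ((F (m + 1)).2) := by
      have hle := hq_le m
      have := aux_prodle w C (le_of_lt hC0) hCw ((F (m + 1)).1 - (F (m + 1)).2) ((F (m + 1)).2)
      have e : (F (m + 1)).1 - (F (m + 1)).2 + (F (m + 1)).2 = (F (m + 1)).1 := by omega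
      rwa [e] at this
    have h4 : C ^ ((F m).1 + 1) < C ^ ((F (m + 1)).2) := lt_of_lt_of_le (lt_trans (hMgt m) h2) h3
    exact (pow_lt_pow_iff_right₀ hC1).1 h4
  exact ⟨fun m => (F m).1, fun m => (F (m + 1)).2, rfl, hq_le, hsq, hprod⟩

theorem stmt13 (p : ENNReal) [hp1 : Fact (1 ≤ p)] (hp2 : p ≠ ⊤)
    (w : ℕ → ℝ) (hwbd : ∃ C : ℝ, ∀ j, |w j| ≤ C) (hw0 : ∀ j, w j ≠ 0)
    (T : lp (fun _ : ℕ => ℝ) p →L[ℝ] lp (fun _ : ℕ => ℝ) p)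
    (hT : ∀ (x : lp (fun _ : ℕ => ℝ) p) (i : ℕ), (T x) i = w (i + 1) * x (i + 1))
    (hsup : ∀ M : ℝ, ∃ k n : ℕ, M < ∏ j ∈ Finset.Icc (k + 1) (n + k + 1), |w j|) :
    ∃ (S : Set (lp (fun _ : ℕ => ℝ) p)) (pn qn : ℕ → ℕ),
      Dense S ∧ ¬ S.Countable ∧
      ∀ x ∈ S, ∀ y ∈ S, x ≠ y →
        Tendsto (fun n => ‖(T ^ pn n) (x - y)‖) atTop (𝓝 0) ∧
        Tendsto (fun n => ‖(T ^ qn n) (x - y)‖) atTop atTop := by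
  classical
  obtain ⟨C₀, hC₀⟩ := hwbd
  set C : ℝ := max C₀ 2 with hCdef
  have hCw : ∀ j, |w j| ≤ C := fun j => (hC₀ j).trans (le_max_left _ _)
  have hC1 : 1 < C := lt_of_lt_of_le one_lt_two (le_max_right _ _)
  have hC0 : (0:ℝ) < C := lt_trans one_pos hC1
  have hC1' : (1:ℝ) ≤ C := le_of_lt hC1
  have hp0 : p ≠ 0 := by
    intro h
    have := hp1.out
    rw [h] at this
    simp at this
  have hpR : 0 < p.toReal := ENNReal.toReal_pos hp0 hp2
  obtain ⟨s, q, hs0, hqs, hsq, hprod⟩ := aux_seq w C hC1 hCw hsup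
  have hsmono : StrictMono s := strictMono_nat_of_lt_succ (fun m => by
    have h1 := hsq m; have h2 := hqs m; omega)
  -- power formula
  have hTpow : ∀ (r : ℕ) (x : lp (fun _ : ℕ => ℝ) p) (i : ℕ),
      ((T ^ r) x) i = (∏ j ∈ Finset.Icc (i + 1) (i + r), w j) * x (i + r) := by
    intro r
    induction r with
    | zero =>
      intro x i
      have : Finset.Icc (i + 1) (i + 0) = ∅ := by
        apply Finset.Icc_eq_empty; omega
      rw [this]
      simp
    | succ r ih =>
      intro x i
      have h1 : (T ^ (r + 1)) x = (T ^ r) (T x) := by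
        rw [pow_succ]; rfl
      rw [h1, ih (T x) i, hT]
      have h2 : ∏ j ∈ Finset.Icc (i + 1) (i + (r + 1)), w j
          = (∏ j ∈ Finset.Icc (i + 1) (i + r), w j) * w (i + r + 1) := by
        have : i + (r + 1) = (i + r) + 1 := by omega
        rw [this, Finset.prod_Icc_succ_top (by omega)]
      rw [h2]
      have : i + (r + 1) = i + r + 1 := by omega
      rw [this]
      ring
  -- single coordinates
  have hsingle_apply : ∀ (i j : ℕ) (a : ℝ),
      (lp.single p i a : lp (fun _ : ℕ => ℝ) p) j = if j = i then a else 0 := by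
    intro i j a
    rw [lp.single_apply]
    by_cases h : j = i
    · subst h; simp
    · simp [h]
  -- action of T^r on singles
  have hTsingle_le : ∀ (r σ : ℕ) (a : ℝ), r ≤ σ →
      (T ^ r) (lp.single p σ a) =
        lp.single p (σ - r) ((∏ j ∈ Finset.Icc (σ - r + 1) σ, w j) * a) := by
    intro r σ a hrσ
    apply lp.ext
    funext i
    rw [hTpow, hsingle_apply, hsingle_apply]
    by_cases h : i = σ - r
    · have h2 : i + r = σ := by omega
      rw [if_pos h2, if_pos h]
      have e1 : i + 1 = σ - r + 1 := by omega
      rw [e1, h2]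
    · have h2 : ¬ (i + r = σ) := by omega
      rw [if_neg h2, if_neg h, mul_zero]
  have hTsingle_gt : ∀ (r σ : ℕ) (a : ℝ), σ < r →
      (T ^ r) (lp.single p σ a) = 0 := by
    intro r σ a hrσ
    apply lp.ext
    funext i
    rw [hTpow, hsingle_apply]
    have h2 : ¬ (i + r = σ) := by omega
    rw [if_neg h2, mul_zero]
    rfl
  -- evaluation continuous linear map
  set ev : ℕ → (lp (fun _ : ℕ => ℝ) p →L[ℝ] ℝ) := fun i =>
    LinearMap.mkContinuous
      { toFun := fun x => x i
        map_add' := fun a b => by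
          have := lp.coeFn_add a b
          exact congrFun this i
        map_smul' := fun c a => by
          have := lp.coeFn_smul c a
          exact congrFun this i }
      1 (fun x => by
        simpa using lp.norm_apply_le_norm hp0 x i) with hev
  have hev_apply : ∀ (i : ℕ) (x : lp (fun _ : ℕ => ℝ) p), ev i x = x i := fun i x => rfl
  -- the sequence c
  set c : ℕ → ℝ := fun m => ((2:ℝ) ^ m * C ^ (s m + 1))⁻¹ with hc
  have hcpos : ∀ m, 0 < c m := by
    intro m; apply inv_pos.2; positivity
  have hcmul : ∀ m, (2:ℝ) ^ m * C ^ (s m + 1) * c m = 1 := by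
    intro m; apply mul_inv_cancel₀; positivity
  have hcle : ∀ m, c m ≤ ((2:ℝ)⁻¹) ^ m := by
    intro m
    rw [inv_pow]
    have h1 : (1:ℝ) ≤ C ^ (s m + 1) := one_le_pow₀ hC1'
    have h2 : (0:ℝ) < 2 ^ m := by positivity
    rw [hc]
    apply inv_anti₀ h2
    nlinarith
  -- the vector u
  set g : ℕ → lp (fun _ : ℕ => ℝ) p := fun m => lp.single p (s (m + 1)) (c m) with hg
  have hgnorm : ∀ m, ‖g m‖ = c m := by
    intro m
    have h := lp.norm_single (E := fun _ : ℕ => ℝ) (pos_iff_ne_zero.2 hp0) (s (m + 1)) (c m)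
    simp only [hg]
    simp only [Real.norm_eq_abs] at h
    rw [h, abs_of_pos (hcpos m)]
  have hgeo : Summable (fun m : ℕ => ((2:ℝ)⁻¹) ^ m) :=
    summable_geometric_of_lt_one (by norm_num) (by norm_num)
  have hgsum : Summable g := by
    apply Summable.of_norm
    exact Summable.of_nonneg_of_le (fun m => norm_nonneg _)
      (fun m => by rw [hgnorm]; exact hcle m) hgeo
  set u : lp (fun _ : ℕ => ℝ) p := ∑' m, g m with hu
  have husum : HasSum g u := hgsum.hasSum
  -- coordinates of u
  have hucoord : ∀ m, u (s (m + 1)) = c m := by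
    intro m
    have h1 : HasSum (fun m' => ev (s (m + 1)) (g m')) (ev (s (m + 1)) u) :=
      (ev (s (m + 1))).hasSum husum
    have h2 : ∀ m', m' ≠ m → ev (s (m + 1)) (g m') = 0 := by
      intro m' hm'
      rw [hev_apply]
      simp only [hg]
      rw [hsingle_apply]
      rw [if_neg]
      intro h
      have h3 := hsmono.injective h
      exact hm' (by omega)
    have h3 : HasSum (fun m' => ev (s (m + 1)) (g m')) (ev (s (m + 1)) (g m)) :=
      hasSum_single m (fun m' hm' => h2 m' hm')
    have h4 := h1.unique h3
    rw [hev_apply] at h4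
    rw [h4, hev_apply]
    simp only [hg]
    rw [hsingle_apply, if_pos rfl]
  -- hasSum under T^r
  have hTu : ∀ r : ℕ, HasSum (fun m => (T ^ r) (g m)) ((T ^ r) u) := fun r => (T ^ r).hasSum husum
  -- norm bound per term
  have hTgle : ∀ (r m : ℕ), r ≤ s (m + 1) → ‖(T ^ r) (g m)‖ ≤ C ^ r * c m := by
    intro r m hr
    simp only [hg]
    rw [hTsingle_le r (s (m + 1)) (c m) hr]
    have h := lp.norm_single (E := fun _ : ℕ => ℝ) (pos_iff_ne_zero.2 hp0)
      (s (m + 1) - r)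
      ((∏ j ∈ Finset.Icc (s (m + 1) - r + 1) (s (m + 1)), w j) * c m)
    simp only [Real.norm_eq_abs] at h
    rw [h, abs_mul, abs_of_pos (hcpos m)]
    apply mul_le_mul_of_nonneg_right _ (le_of_lt (hcpos m))
    rw [Finset.abs_prod]
    have e2 : Finset.Icc (s (m + 1) - r + 1) (s (m + 1))
        = Finset.Icc ((s (m + 1) - r) + 1) ((s (m + 1) - r) + r) := by
      congr 1
      omega
    rw [e2]
    exact aux_prodle w C (le_of_lt hC0) hCw _ _
  -- upper bound along p-sequence
  have hupper : ∀ l : ℕ, ‖(T ^ (s l + 1)) u‖ ≤ 2 * ((2:ℝ)⁻¹) ^ l := by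
    intro l
    have hTnorm : ∀ m, ‖(T ^ (s l + 1)) (g m)‖ ≤ (if m < l then 0 else ((2:ℝ)⁻¹) ^ m) := by
      intro m
      by_cases hm : m < l
      · rw [if_pos hm]
        have hgt : s (m + 1) < s l + 1 := by
          have h3 : s (m + 1) ≤ s l := hsmono.monotone (by omega)
          omega
        simp only [hg]
        rw [hTsingle_gt (s l + 1) (s (m + 1)) (c m) hgt]
        simp
      · rw [if_neg hm]
        push_neg at hm
        have hsl : s l ≤ s m := hsmono.monotone hm
        have hrle : s l + 1 ≤ s (m + 1) := by
          have h2 := hsq m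
          have h3 := hqs m
          omega
        have h2m : ((2:ℝ) ^ m) ≠ 0 := by positivity
        have hCc : C ^ (s m + 1) * c m = ((2:ℝ) ^ m)⁻¹ := by
          apply mul_left_cancel₀ h2m
          rw [← mul_assoc, hcmul m, mul_inv_cancel₀ h2m]
        calc ‖(T ^ (s l + 1)) (g m)‖ ≤ C ^ (s l + 1) * c m := hTgle (s l + 1) m hrle
          _ ≤ C ^ (s m + 1) * c m := by
              apply mul_le_mul_of_nonneg_right _ (le_of_lt (hcpos m))
              exact pow_le_pow_right₀ hC1' (by omega)
          _ = ((2:ℝ)⁻¹) ^ m := by rw [hCc, inv_pow]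
    have hb : ∀ m, (if m < l then (0:ℝ) else ((2:ℝ)⁻¹) ^ m) ≤ ((2:ℝ)⁻¹) ^ m := by
      intro m
      split
      · positivity
      · exact le_rfl
    have hsumTg : Summable (fun m => ‖(T ^ (s l + 1)) (g m)‖) :=
      Summable.of_nonneg_of_le (fun m => norm_nonneg _)
        (fun m => (hTnorm m).trans (hb m)) hgeo
    have htsum_eq : (T ^ (s l + 1)) u = ∑' m, (T ^ (s l + 1)) (g m) := ((hTu (s l + 1)).tsum_eq).symm
    have hshift : Summable (fun m => ‖(T ^ (s l + 1)) (g (m + l))‖) :=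
      (summable_nat_add_iff l).2 hsumTg
    have hgeoshift : Summable (fun m : ℕ => ((2:ℝ)⁻¹) ^ (m + l)) :=
      (summable_nat_add_iff l).2 hgeo
    have h7 : ∑ i ∈ Finset.range l, ‖(T ^ (s l + 1)) (g i)‖ = 0 := by
      apply Finset.sum_eq_zero
      intro i hi
      have h8 := hTnorm i
      rw [if_pos (Finset.mem_range.1 hi)] at h8
      exact le_antisymm h8 (norm_nonneg _)
    have h6 := Summable.sum_add_tsum_nat_add l hsumTg
    rw [h7, zero_add] at h6
    have h9 : ∑' m, ‖(T ^ (s l + 1)) (g (m + l))‖ ≤ ∑' m : ℕ, ((2:ℝ)⁻¹) ^ (m + l) := by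
      apply Summable.tsum_le_tsum _ hshift hgeoshift
      intro m
      have := hTnorm (m + l)
      rwa [if_neg (by omega)] at this
    have h10 : ∑' m : ℕ, ((2:ℝ)⁻¹) ^ (m + l) = 2 * ((2:ℝ)⁻¹) ^ l := by
      have h11 : ∀ m : ℕ, ((2:ℝ)⁻¹) ^ (m + l) = ((2:ℝ)⁻¹) ^ m * ((2:ℝ)⁻¹) ^ l := fun m => pow_add _ _ _
      rw [tsum_congr h11, tsum_mul_right, tsum_geometric_of_lt_one (by norm_num) (by norm_num)]
      norm_num
    calc ‖(T ^ (s l + 1)) u‖ = ‖∑' m, (T ^ (s l + 1)) (g m)‖ := by rw [← htsum_eq]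
      _ ≤ ∑' m, ‖(T ^ (s l + 1)) (g m)‖ := norm_tsum_le_tsum_norm hsumTg
      _ = ∑' m, ‖(T ^ (s l + 1)) (g (m + l))‖ := h6.symm
      _ ≤ ∑' m : ℕ, ((2:ℝ)⁻¹) ^ (m + l) := h9
      _ = 2 * ((2:ℝ)⁻¹) ^ l := h10
  -- lower bound along q-sequence
  have hlower : ∀ m : ℕ, (m + 1 : ℝ) ≤ ‖(T ^ (q m)) u‖ := by
    intro m
    have hrle : q m ≤ s (m + 1) := hqs m
    have h1 : HasSum (fun m' => ev (s (m + 1) - q m) ((T ^ (q m)) (g m')))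
        (ev (s (m + 1) - q m) ((T ^ (q m)) u)) := (ev (s (m + 1) - q m)).hasSum (hTu (q m))
    have h2 : ∀ m', m' ≠ m → ev (s (m + 1) - q m) ((T ^ (q m)) (g m')) = 0 := by
      intro m' hm'
      rcases lt_or_gt_of_ne hm' with hlt | hgt
      · have hgt2 : s (m' + 1) < q m := by
          have h3 : s (m' + 1) ≤ s m := hsmono.monotone (by omega)
          have h4 := hsq m
          omega
        simp only [hg]
        rw [hTsingle_gt (q m) _ _ hgt2]
        simp
      · have hle2 : q m ≤ s (m' + 1) := le_trans hrle (hsmono.monotone (by omega))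
        simp only [hg]
        rw [hTsingle_le (q m) _ _ hle2, hev_apply, hsingle_apply, if_neg]
        have h5 : s (m + 1) < s (m' + 1) := hsmono (by omega)
        omega
    have h3 : HasSum (fun m' => ev (s (m + 1) - q m) ((T ^ (q m)) (g m')))
        (ev (s (m + 1) - q m) ((T ^ (q m)) (g m))) := hasSum_single m h2
    have h4 := h1.unique h3
    have h5 : ev (s (m + 1) - q m) ((T ^ (q m)) (g m))
        = (∏ j ∈ Finset.Icc (s (m + 1) - q m + 1) (s (m + 1)), w j) * c m := by
      simp only [hg]
      rw [hTsingle_le (q m) _ _ hrle, hev_apply, hsingle_apply, if_pos rfl]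
    have h6 : |ev (s (m + 1) - q m) ((T ^ (q m)) u)| ≤ ‖(T ^ (q m)) u‖ := by
      rw [hev_apply]
      simpa using lp.norm_apply_le_norm hp0 ((T ^ (q m)) u) (s (m + 1) - q m)
    refine le_trans ?_ h6
    rw [h4, h5, abs_mul, abs_of_pos (hcpos m), Finset.abs_prod]
    have h8 := hprod m
    have h9 : ((m + 1 : ℝ) * 2 ^ m * C ^ (s m + 1) + C ^ (s m + 1)) * c m
        ≤ (∏ j ∈ Finset.Icc (s (m + 1) - q m + 1) (s (m + 1)), |w j|) * c m :=
      mul_le_mul_of_nonneg_right (le_of_lt h8) (le_of_lt (hcpos m))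
    have h10 : (m + 1 : ℝ) * ((2:ℝ) ^ m * C ^ (s m + 1) * c m) + C ^ (s m + 1) * c m
        = ((m + 1 : ℝ) * 2 ^ m * C ^ (s m + 1) + C ^ (s m + 1)) * c m := by ring
    have h11 : (0:ℝ) < C ^ (s m + 1) * c m := mul_pos (pow_pos hC0 _) (hcpos m)
    rw [hcmul m] at h10
    linarith
  -- T^r kills finitely supported vectors
  have hvanish : ∀ (v : lp (fun _ : ℕ => ℝ) p) (N : ℕ), (∀ i, N ≤ i → v i = 0) →
      ∀ r : ℕ, N ≤ r → (T ^ r) v = 0 := by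
    intro v N hv r hr
    apply lp.ext
    funext i
    rw [hTpow, hv (i + r) (by omega), mul_zero]
    rfl
  clear_value u g c ev
  -- embedding into an interval
  have hcard : Nonempty ((lp (fun _ : ℕ => ℝ) p) ↪ (Set.Ioo (0:ℝ) 1)) := by
    rw [← Cardinal.le_def]
    have h1 : Cardinal.mk (lp (fun _ : ℕ => ℝ) p) ≤ Cardinal.mk (ℕ → ℝ) :=
      Cardinal.mk_le_of_injective
        (f := fun x : lp (fun _ : ℕ => ℝ) p => (x : ∀ _ : ℕ, ℝ)) (fun a b h => lp.ext h)
    have h2 : Cardinal.mk (ℕ → ℝ) = Cardinal.continuum := by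
      rw [← Cardinal.power_def, Cardinal.mk_real, Cardinal.mk_nat, Cardinal.continuum_power_aleph0]
    rw [Cardinal.mk_Ioo_real (by norm_num : (0:ℝ) < 1)]
    exact h1.trans_eq h2
  obtain ⟨e⟩ := hcard
  have hfrac : ∀ j : ℕ, (0:ℝ) < 1/((j:ℝ)+1) - 1/((j:ℝ)+2) := by
    intro j
    rw [sub_pos]
    apply one_div_lt_one_div_of_lt (by positivity)
    linarith
  set ψ : ℕ → lp (fun _ : ℕ => ℝ) p → ℝ := fun j d =>
    (1:ℝ)/((j:ℝ)+2) + (e d : ℝ) * (1/((j:ℝ)+1) - 1/((j:ℝ)+2)) with hψ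
  have hψmem : ∀ (j : ℕ) d, ψ j d ∈ Set.Ioo ((1:ℝ)/((j:ℝ)+2)) (1/((j:ℝ)+1)) := by
    intro j d
    obtain ⟨he0, he1⟩ := (e d).2
    have hL := hfrac j
    constructor
    · simp only [hψ]
      nlinarith
    · simp only [hψ]
      nlinarith
  have hψlt : ∀ (j : ℕ) d, ψ j d < 1/((j:ℝ)+1) := fun j d => (hψmem j d).2
  have hψpos : ∀ (j : ℕ) d, 0 < ψ j d := fun j d => lt_trans (by positivity) (hψmem j d).1
  have hdisj : ∀ (j j' : ℕ) d d', j < j' → ψ j d = ψ j' d' → False := by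
    intro j j' d d' hlt h
    have h1 : (1:ℝ)/((j':ℝ)+1) ≤ 1/((j:ℝ)+2) := by
      apply one_div_le_one_div_of_le (by positivity)
      have : ((j:ℝ)) + 1 ≤ (j':ℝ) := by exact_mod_cast hlt
      linarith
    have h2 := (hψmem j d).1
    have h3 := (hψmem j' d').2
    rw [← h] at h3
    exact lt_asymm h2 (lt_of_lt_of_le h3 h1)
  have hψinj : ∀ (j : ℕ) d (j' : ℕ) d', ψ j d = ψ j' d' → j = j' ∧ d = d' := by
    intro j d j' d' h
    have hjj : j = j' := by
      rcases Nat.lt_trichotomy j j' with hlt | heq | hgt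
      · exact absurd (hdisj j j' d d' hlt h) (by simp)
      · exact heq
      · exact absurd (hdisj j' j d' d hgt h.symm) (by simp)
    subst hjj
    refine ⟨rfl, ?_⟩
    have hL := hfrac j
    have h2 : (e d : ℝ) * (1/((j:ℝ)+1) - 1/((j:ℝ)+2)) = (e d' : ℝ) * (1/((j:ℝ)+1) - 1/((j:ℝ)+2)) := by
      simp only [hψ] at h
      linarith
    have h3 : (e d : ℝ) = (e d' : ℝ) := mul_right_cancel₀ (ne_of_gt hL) h2
    exact e.injective (Subtype.ext h3)
  clear_value ψ
  -- the scrambled set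
  refine ⟨{x | ∃ d : lp (fun _ : ℕ => ℝ) p, (∃ N : ℕ, ∀ i, N ≤ i → d i = 0) ∧
      ∃ j : ℕ, x = d + ψ j d • u}, fun n => s n + 1, q, ?_, ?_, ?_⟩
  · -- dense
    rw [Metric.dense_iff]
    intro x r hr
    have hx := (lp.hasSum_single hp2 x).tendsto_sum_nat
    rw [Metric.tendsto_atTop] at hx
    obtain ⟨N, hN⟩ := hx (r/2) (by positivity)
    set d : lp (fun _ : ℕ => ℝ) p := ∑ i ∈ Finset.range N, lp.single p i (x i) with hd
    have hdF : ∃ Nd : ℕ, ∀ i, Nd ≤ i → d i = 0 := by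
      refine ⟨N, fun i hi => ?_⟩
      have h1 : d i = ∑ i' ∈ Finset.range N, (lp.single p i' (x i') : lp (fun _ : ℕ => ℝ) p) i := by
        rw [hd, lp.coeFn_sum, Finset.sum_apply]
      rw [h1]
      apply Finset.sum_eq_zero
      intro i' hi'
      rw [hsingle_apply, if_neg]
      have := Finset.mem_range.1 hi'
      omega
    obtain ⟨j, hj⟩ : ∃ j : ℕ, (1/((j:ℝ)+1)) * (‖u‖ + 1) < r/2 := by
      obtain ⟨j, hj⟩ := exists_nat_gt ((‖u‖ + 1) / (r/2))
      refine ⟨j, ?_⟩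
      rw [div_lt_iff₀ (by positivity)] at hj
      have hj1 : (0:ℝ) < (j:ℝ) + 1 := by positivity
      have h2 : (‖u‖ + 1) < (r/2) * ((j:ℝ)+1) := by nlinarith
      calc (1/((j:ℝ)+1)) * (‖u‖+1) = (‖u‖+1)/((j:ℝ)+1) := by ring
        _ < r/2 := by rw [div_lt_iff₀ hj1]; linarith
    refine ⟨d + ψ j d • u, Set.mem_inter ?_ ⟨d, hdF, j, rfl⟩⟩
    rw [Metric.mem_ball]
    have h1 : dist d x < r/2 := hN N le_rfl
    have h2 : ‖ψ j d • u‖ = ψ j d * ‖u‖ := by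
      rw [norm_smul, Real.norm_eq_abs, abs_of_pos (hψpos j d)]
    have h3 : ψ j d * ‖u‖ ≤ (1/((j:ℝ)+1)) * (‖u‖+1) := by
      have ha := hψlt j d
      have hb := hψpos j d
      have hcn := norm_nonneg u
      have hj1 : (0:ℝ) < 1/((j:ℝ)+1) := by positivity
      calc ψ j d * ‖u‖ ≤ (1/((j:ℝ)+1)) * ‖u‖ :=
            mul_le_mul_of_nonneg_right (le_of_lt ha) hcn
        _ ≤ (1/((j:ℝ)+1)) * (‖u‖+1) := by linarith
    calc dist (d + ψ j d • u) x ≤ dist (d + ψ j d • u) d + dist d x := dist_triangle _ _ _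
      _ = ‖ψ j d • u‖ + dist d x := by rw [dist_eq_norm, add_sub_cancel_left]
      _ < r/2 + r/2 := by
          apply add_lt_add_of_le_of_lt _ h1
          rw [h2]
          exact le_of_lt (lt_of_le_of_lt h3 hj)
      _ = r := by ring
  · -- uncountable
    intro hcount
    set f : ℝ → lp (fun _ : ℕ => ℝ) p := fun t =>
      lp.single p 0 t + ψ 0 (lp.single p 0 t) • u with hf
    have hs1 : s (0 + 1) ≠ 0 := by
      have h1 := hsq 0
      have h2 := hqs 0
      rw [hs0] at h1
      omega
    have hinj : Function.Injective f := by
      intro t t' h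
      simp only [hf] at h
      have hcoord : ∀ i : ℕ, (lp.single p 0 t : lp (fun _ : ℕ => ℝ) p) i
          + ψ 0 (lp.single p 0 t) * u i
          = (lp.single p 0 t' : lp (fun _ : ℕ => ℝ) p) i + ψ 0 (lp.single p 0 t') * u i := by
        intro i
        have h0 := congrFun (congrArg (fun z : lp (fun _ : ℕ => ℝ) p => (z : ∀ _ : ℕ, ℝ)) h) i
        simp only [lp.coeFn_add, lp.coeFn_smul, Pi.add_apply, Pi.smul_apply, smul_eq_mul] at h0
        exact h0
      have h1 := hcoord (s (0 + 1))
      rw [hsingle_apply, if_neg hs1, hsingle_apply, if_neg hs1, hucoord 0] at h1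
      simp only [zero_add] at h1
      have h2 : ψ 0 (lp.single p 0 t) = ψ 0 (lp.single p 0 t') :=
        mul_right_cancel₀ (ne_of_gt (hcpos 0)) h1
      have h3 := (hψinj 0 (lp.single p 0 t) 0 (lp.single p 0 t') h2).2
      have h4 : (lp.single p 0 t : lp (fun _ : ℕ => ℝ) p) 0
          = (lp.single p 0 t' : lp (fun _ : ℕ => ℝ) p) 0 := by rw [h3]
      rwa [hsingle_apply, if_pos rfl, hsingle_apply, if_pos rfl] at h4
    have hpre := hcount.preimage hinj
    have huniv : f ⁻¹' {x | ∃ d : lp (fun _ : ℕ => ℝ) p, (∃ N : ℕ, ∀ i, N ≤ i → d i = 0) ∧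
        ∃ j : ℕ, x = d + ψ j d • u} = Set.univ := by
      apply Set.eq_univ_of_forall
      intro t
      refine ⟨lp.single p 0 t, ⟨1, fun i hi => ?_⟩, 0, rfl⟩
      rw [hsingle_apply, if_neg (by omega)]
    rw [huniv] at hpre
    exact Cardinal.not_countable_real hpre
  · -- Li-Yorke pairs
    rintro x ⟨d, ⟨N1, hN1⟩, j, rfl⟩ y ⟨d', ⟨N2, hN2⟩, j', rfl⟩ hxy
    have htne : ψ j d - ψ j' d' ≠ 0 := by
      intro h0
      have h1 : ψ j d = ψ j' d' := by linarith [sub_eq_zero.1 h0]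
      obtain ⟨hj, hd⟩ := hψinj j d j' d' h1
      exact hxy (by rw [hd, hj])
    have hz : ∀ r : ℕ, max N1 N2 ≤ r →
        (T ^ r) (d + ψ j d • u - (d' + ψ j' d' • u)) = (ψ j d - ψ j' d') • ((T ^ r) u) := by
      intro r hr
      have hsplit : d + ψ j d • u - (d' + ψ j' d' • u) = (d - d') + (ψ j d - ψ j' d') • u := by
        rw [sub_smul]
        abel
      rw [hsplit, map_add, map_smul]
      have hdd : (T ^ r) (d - d') = 0 := by
        apply hvanish (d - d') (max N1 N2) _ r hr
        intro i hi
        have h1 : (d - d') i = d i - d' i := congrFun (lp.coeFn_sub d d') i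
        rw [h1, hN1 i (le_trans (le_max_left _ _) hi), hN2 i (le_trans (le_max_right _ _) hi),
          sub_zero]
      rw [hdd, zero_add]
    constructor
    · apply squeeze_zero' (Eventually.of_forall (fun n => norm_nonneg _))
        (g := fun n => (|ψ j d - ψ j' d'| * 2) * ((2:ℝ)⁻¹) ^ n)
      · filter_upwards [eventually_ge_atTop (max N1 N2)] with n hn
        have hge : max N1 N2 ≤ s n + 1 := by
          have := hsmono.le_apply (x := n)
          omega
        rw [hz (s n + 1) hge, norm_smul, Real.norm_eq_abs, mul_assoc]
        exact mul_le_mul_of_nonneg_left (hupper n) (abs_nonneg _)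
      · have h1 := tendsto_pow_atTop_nhds_zero_of_lt_one
          (by norm_num : (0:ℝ) ≤ 2⁻¹) (by norm_num : (2:ℝ)⁻¹ < 1)
        have h2 := h1.const_mul (|ψ j d - ψ j' d'| * 2)
        simpa using h2
    · apply tendsto_atTop_mono' atTop
        (f₁ := fun n : ℕ => |ψ j d - ψ j' d'| * ((n:ℝ) + 1))
      · filter_upwards [eventually_ge_atTop (max N1 N2)] with n hn
        have hge : max N1 N2 ≤ q n := by
          have h1 := hsq n
          have h2 := hsmono.le_apply (x := n)
          omega
        rw [hz (q n) hge, norm_smul, Real.norm_eq_abs]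
        exact mul_le_mul_of_nonneg_left (hlower n) (abs_nonneg _)
      · have h1 : Tendsto (fun n : ℕ => ((n:ℝ) + 1)) atTop atTop :=
          tendsto_atTop_add_const_right _ 1 tendsto_natCast_atTop_atTop
        exact h1.const_mul_atTop (abs_pos.2 htne)
end

section
/- Let B_w be the unilateral backward weighted shift on ℓ^p(ℕ), 1 ≤ p < ∞, with bounded non-zero weights {w_j}. If there exists a Li–Yorke scrambled pair for B_w (a pair (x, y) with liminf_n ‖B_w^n(x − y)‖ = 0 and limsup_n ‖B_w^n(x − y)‖ > 0), then sup_{k,n∈ℕ} ∏_{j=k+1}^{n+k+1} |w_j| = ∞. -/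
open Filter Topology

set_option maxHeartbeats 1000000

theorem stmt14 (p : ENNReal) [hp1 : Fact (1 ≤ p)] (hp2 : p ≠ ⊤)
    (w : ℕ → ℝ) (hwbd : ∃ C : ℝ, ∀ j, |w j| ≤ C) (hw0 : ∀ j, w j ≠ 0)
    (T : lp (fun _ : ℕ => ℝ) p →L[ℝ] lp (fun _ : ℕ => ℝ) p)
    (hT : ∀ (x : lp (fun _ : ℕ => ℝ) p) (i : ℕ), (T x) i = w (i + 1) * x (i + 1))
    (x y : lp (fun _ : ℕ => ℝ) p)
    (hliminf : ∀ ε > 0, ∃ᶠ n in atTop, ‖(T ^ n) (x - y)‖ < ε)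
    (hlimsup : ∃ c > 0, ∃ᶠ n in atTop, c < ‖(T ^ n) (x - y)‖) :
    ∀ M : ℝ, ∃ k n : ℕ, M < ∏ j ∈ Finset.Icc (k + 1) (n + k + 1), |w j| := by
  intro M
  by_contra hMc
  push_neg at hMc
  obtain ⟨c, hc, hfreq⟩ := hlimsup
  have hq : 0 < p.toReal :=
    ENNReal.toReal_pos (lt_of_lt_of_le zero_lt_one hp1.out).ne' hp2
  have hM0 : 0 < M := by
    have h := hMc 0 0
    simp at h
    exact lt_of_lt_of_le (abs_pos.mpr (hw0 1)) h
  -- coordinate formula for powers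
  have hpow : ∀ (m : ℕ) (u : lp (fun _ : ℕ => ℝ) p) (i : ℕ),
      ((T ^ m) u) i = (∏ j ∈ Finset.Icc (i + 1) (i + m), w j) * u (i + m) := by
    intro m
    induction m with
    | zero => intro u i; simp
    | succ m ih =>
      intro u i
      have h1 : (T ^ (m + 1)) u = (T ^ m) (T u) := by
        rw [pow_succ]; rfl
      rw [h1, ih (T u) i, hT]
      rw [show i + (m + 1) = (i + m) + 1 from rfl,
        Finset.prod_Icc_succ_top (by omega : i + 1 ≤ i + m + 1)]
      ring
  -- norm bound for powers
  have hbound : ∀ (m : ℕ), 1 ≤ m → ∀ u : lp (fun _ : ℕ => ℝ) p,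
      ‖(T ^ m) u‖ ≤ M * ‖u‖ := by
    intro m hm u
    have h1 := lp.hasSum_norm hq ((T ^ m) u)
    have h2 := lp.hasSum_norm hq u
    have hsum2 : Summable (fun i => ‖u i‖ ^ p.toReal) := h2.summable
    have hshift : Summable (fun i : ℕ => ‖u (i + m)‖ ^ p.toReal) :=
      hsum2.comp_injective (add_left_injective m)
    have hcomp : ∀ i : ℕ, ‖((T ^ m) u) i‖ ^ p.toReal
        ≤ M ^ p.toReal * ‖u (i + m)‖ ^ p.toReal := by
      intro i
      rw [← Real.mul_rpow hM0.le (norm_nonneg _)]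
      apply Real.rpow_le_rpow (norm_nonneg _) _ hq.le
      rw [hpow m u i, Real.norm_eq_abs, abs_mul]
      have habs : |∏ j ∈ Finset.Icc (i + 1) (i + m), w j| ≤ M := by
        rw [Finset.abs_prod]
        have h := hMc i (m - 1)
        rwa [show m - 1 + i + 1 = i + m from by omega] at h
      calc |∏ j ∈ Finset.Icc (i + 1) (i + m), w j| * |u (i + m)|
          ≤ M * |u (i + m)| := by
            apply mul_le_mul_of_nonneg_right habs (abs_nonneg _)
        _ = M * ‖u (i + m)‖ := rfl
    have key : ‖(T ^ m) u‖ ^ p.toReal ≤ (M * ‖u‖) ^ p.toReal := by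
      have hle1 : ‖(T ^ m) u‖ ^ p.toReal
          ≤ ∑' i : ℕ, M ^ p.toReal * ‖u (i + m)‖ ^ p.toReal := by
        rw [← h1.tsum_eq]
        exact h1.summable.tsum_le_tsum hcomp (hshift.mul_left _)
      have hle2 : (∑' i : ℕ, ‖u (i + m)‖ ^ p.toReal)
          ≤ ∑' i : ℕ, ‖u i‖ ^ p.toReal := by
        apply hshift.tsum_le_tsum_of_inj (fun i => i + m) (add_left_injective m)
          (fun c _ => by positivity) (fun a => le_refl _) hsum2
      rw [Real.mul_rpow hM0.le (norm_nonneg _), ← h2.tsum_eq]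
      calc ‖(T ^ m) u‖ ^ p.toReal
          ≤ ∑' i : ℕ, M ^ p.toReal * ‖u (i + m)‖ ^ p.toReal := hle1
        _ = M ^ p.toReal * ∑' i : ℕ, ‖u (i + m)‖ ^ p.toReal := tsum_mul_left
        _ ≤ M ^ p.toReal * ∑' i : ℕ, ‖u i‖ ^ p.toReal := by
            apply mul_le_mul_of_nonneg_left hle2 (by positivity)
    by_contra hlt
    push_neg at hlt
    have := Real.rpow_lt_rpow (by positivity) hlt hq
    linarith
  -- derive the contradiction
  have hε : 0 < c / M := div_pos hc hM0
  obtain ⟨n, hn⟩ := (hliminf _ hε).exists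
  obtain ⟨N, hN1, hN2⟩ :=
    ((hfreq.and_eventually (eventually_ge_atTop (n + 1)))).exists
  have hsplit : (T ^ N) (x - y) = (T ^ (N - n)) ((T ^ n) (x - y)) := by
    rw [← ContinuousLinearMap.mul_apply, ← pow_add, Nat.sub_add_cancel (by omega)]
  have h1 := hbound (N - n) (by omega) ((T ^ n) (x - y))
  have h2 : M * ‖(T ^ n) (x - y)‖ < M * (c / M) :=
    mul_lt_mul_of_pos_left hn hM0
  rw [mul_div_cancel₀ _ hM0.ne'] at h2
  rw [hsplit] at hN1
  linarith
end

section
/- Let B_w be the bilateral backward weighted shift on ℓ^1(ℤ) with bounded non-zero weight sequence {w_j}_{j∈ℤ}, defined by B_w e_i = w_i e_{i−1}. If there exists a Li–Yorke scrambled pair (x, y) (i.e., liminf_n ‖B_w^n(x−y)‖ = 0 and limsup_n ‖B_w^n(x−y)‖ > 0), then liminf_{n→∞} ∏_{j=−n+1}^{0} |w_j| = 0 and sup_{k∈ℤ, n∈ℕ} ∏_{j=k}^{k+n} |w_j| = ∞. -/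
open Filter Topology

private lemma Icc_eq_Ioc_int (a b : ℤ) : Finset.Icc (a + 1) b = Finset.Ioc a b := by
  ext j; simp only [Finset.mem_Icc, Finset.mem_Ioc]; omega

private lemma prod_Ioc_glue (f : ℤ → ℝ) {a b c : ℤ} (h1 : a ≤ b) (h2 : b ≤ c) :
    (∏ j ∈ Finset.Ioc a b, f j) * ∏ j ∈ Finset.Ioc b c, f j = ∏ j ∈ Finset.Ioc a c, f j := by
  have hd : Disjoint (Finset.Ioc a b) (Finset.Ioc b c) := by
    rw [Finset.disjoint_left]
    intro j hj hj'
    simp only [Finset.mem_Ioc] at hj hj'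
    omega
  rw [← Finset.prod_union hd, Finset.Ioc_union_Ioc_eq_Ioc h1 h2]

private lemma coords (w : ℤ → ℝ)
    (T : lp (fun _ : ℤ => ℝ) 1 →L[ℝ] lp (fun _ : ℤ => ℝ) 1)
    (hT : ∀ (x : lp (fun _ : ℤ => ℝ) 1) (i : ℤ), (T x) i = w (i + 1) * x (i + 1)) :
    ∀ (m : ℕ) (z : lp (fun _ : ℤ => ℝ) 1) (i : ℤ),
      ((T ^ m) z) i = (∏ j ∈ Finset.Ioc i (i + (m : ℤ)), w j) * z (i + (m : ℤ)) := by
  intro m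
  induction m with
  | zero => intro z i; simp
  | succ m ih =>
    intro z i
    have h1 : (T ^ (m + 1)) z = (T ^ m) (T z) := by
      rw [pow_succ]; rfl
    rw [h1, ih (T z) i, hT]
    have hc : i + ((m + 1 : ℕ) : ℤ) = (i + (m : ℤ)) + 1 := by push_cast; ring
    have h3 : (∏ j ∈ Finset.Ioc i (i + ((m + 1 : ℕ) : ℤ)), w j)
        = (∏ j ∈ Finset.Ioc i (i + (m : ℤ)), w j) * w (i + (m : ℤ) + 1) := by
      rw [hc, ← prod_Ioc_glue w (by omega : i ≤ i + (m : ℤ))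
        (by omega : i + (m : ℤ) ≤ i + (m : ℤ) + 1)]
      have : Finset.Ioc (i + (m : ℤ)) (i + (m : ℤ) + 1) = {i + (m : ℤ) + 1} := by
        ext j; simp only [Finset.mem_Ioc, Finset.mem_singleton]; omega
      rw [this, Finset.prod_singleton]
    rw [h3, hc]
    ring

private lemma norm_lp1 (v : lp (fun _ : ℤ => ℝ) 1) : ‖v‖ = ∑' i, ‖v i‖ := by
  rw [lp.norm_eq_tsum_rpow (by norm_num) v]
  simp

private lemma summable_lp1 (v : lp (fun _ : ℤ => ℝ) 1) : Summable fun i => ‖v i‖ := by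
  have := (memℓp_gen_iff (p := 1) (by norm_num)).1 (lp.memℓp v)
  simpa using this

private lemma pow_norm_le (w : ℤ → ℝ)
    (T : lp (fun _ : ℤ => ℝ) 1 →L[ℝ] lp (fun _ : ℤ => ℝ) 1)
    (hT : ∀ (x : lp (fun _ : ℤ => ℝ) 1) (i : ℤ), (T x) i = w (i + 1) * x (i + 1))
    (M : ℝ) (hM : ∀ (k : ℤ) (n : ℕ), ∏ j ∈ Finset.Icc k (k + (n : ℤ)), |w j| ≤ M)
    (m : ℕ) (hm : 1 ≤ m) (u : lp (fun _ : ℤ => ℝ) 1) :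
    ‖(T ^ m) u‖ ≤ M * ‖u‖ := by
  have hMprod : ∀ i : ℤ, ∏ j ∈ Finset.Ioc i (i + (m : ℤ)), |w j| ≤ M := by
    intro i
    have h := hM (i + 1) (m - 1)
    have hcast : (i + 1) + ((m - 1 : ℕ) : ℤ) = i + (m : ℤ) := by omega
    rwa [hcast, Icc_eq_Ioc_int i (i + (m : ℤ))] at h
  have hterm : ∀ i : ℤ, ‖((T ^ m) u) i‖ ≤ M * ‖u (i + (m : ℤ))‖ := by
    intro i
    rw [coords w T hT m u i]
    rw [Real.norm_eq_abs, abs_mul, Finset.abs_prod]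
    exact mul_le_mul_of_nonneg_right (hMprod i) (abs_nonneg _)
  have hgsum : Summable fun i : ℤ => ‖u (i + (m : ℤ))‖ := by
    have := (summable_lp1 u).comp_injective (Equiv.addRight (m : ℤ)).injective
    exact this
  calc ‖(T ^ m) u‖ = ∑' i, ‖((T ^ m) u) i‖ := norm_lp1 _
    _ ≤ ∑' i : ℤ, M * ‖u (i + (m : ℤ))‖ :=
        Summable.tsum_le_tsum hterm (summable_lp1 _) (hgsum.mul_left M)
    _ = M * ∑' i : ℤ, ‖u (i + (m : ℤ))‖ := tsum_mul_left
    _ = M * ‖u‖ := by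
        rw [norm_lp1 u]
        congr 1
        exact (Equiv.addRight (m : ℤ)).tsum_eq fun i => ‖u i‖

theorem stmt15
    (w : ℤ → ℝ) (hwbd : ∃ C : ℝ, ∀ j, |w j| ≤ C) (hw0 : ∀ j, w j ≠ 0)
    (T : lp (fun _ : ℤ => ℝ) 1 →L[ℝ] lp (fun _ : ℤ => ℝ) 1)
    (hT : ∀ (x : lp (fun _ : ℤ => ℝ) 1) (i : ℤ), (T x) i = w (i + 1) * x (i + 1))
    (x y : lp (fun _ : ℤ => ℝ) 1)
    (hliminf : ∀ ε > 0, ∃ᶠ n in atTop, ‖(T ^ n) (x - y)‖ < ε)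
    (hlimsup : ∃ c > 0, ∃ᶠ n in atTop, c < ‖(T ^ n) (x - y)‖) :
    (∀ ε > 0, ∃ᶠ n : ℕ in atTop,
      ∏ j ∈ Finset.Icc (-(n : ℤ) + 1) 0, |w j| < ε) ∧
    (∀ M : ℝ, ∃ (k : ℤ) (n : ℕ), M < ∏ j ∈ Finset.Icc k (k + n), |w j|) := by
  set z := x - y with hz
  obtain ⟨c, hc, hfs⟩ := hlimsup
  -- z ≠ 0, hence some nonzero coordinate
  have hz0 : ∃ i₀ : ℤ, z i₀ ≠ 0 := by
    by_contra h
    push_neg at h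
    have hzz : z = 0 := by
      apply lp.ext
      funext i
      simpa using h i
    obtain ⟨m, -, hm⟩ := frequently_atTop.mp hfs 0
    rw [hzz] at hm
    simp only [map_zero, norm_zero] at hm
    linarith
  obtain ⟨i₀, hi₀⟩ := hz0
  have hzi₀ : 0 < ‖z i₀‖ := by simpa [norm_pos_iff] using hi₀
  -- Part 2
  have part2 : ∀ M : ℝ, ∃ (k : ℤ) (n : ℕ), M < ∏ j ∈ Finset.Icc k (k + n), |w j| := by
    intro M
    by_contra h
    push_neg at h
    have hMpos : 0 < M := by
      have h0 := h 0 0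
      have : (0 : ℝ) < ∏ j ∈ Finset.Icc (0 : ℤ) (0 + (0 : ℕ)), |w j| := by
        apply Finset.prod_pos
        intro j _
        exact abs_pos.mpr (hw0 j)
      linarith
    obtain ⟨n, -, hn⟩ := frequently_atTop.mp (hliminf (c / M) (by positivity)) 0
    obtain ⟨m, hmn, hm⟩ := frequently_atTop.mp hfs (n + 1)
    have hsplit : (T ^ m) z = (T ^ (m - n)) ((T ^ n) z) := by
      have hmeq : m - n + n = m := by omega
      rw [← ContinuousLinearMap.mul_apply, ← pow_add, hmeq]
    have hle : ‖(T ^ m) z‖ ≤ M * ‖(T ^ n) z‖ := by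
      rw [hsplit]
      exact pow_norm_le w T hT M (fun k nn => h k nn) (m - n) (by omega) _
    have : ‖(T ^ m) z‖ < c := by
      calc ‖(T ^ m) z‖ ≤ M * ‖(T ^ n) z‖ := hle
        _ < M * (c / M) := by
            apply mul_lt_mul_of_pos_left hn hMpos
        _ = c := by field_simp
    linarith
  -- Part 1
  refine ⟨?_, part2⟩
  intro ε hε
  set A := ∏ j ∈ Finset.Ioc (0 : ℤ) i₀, |w j| with hA
  set B := ∏ j ∈ Finset.Ioc i₀ (0 : ℤ), |w j| with hB
  have hApos : 0 < A := Finset.prod_pos fun j _ => abs_pos.mpr (hw0 j)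
  have hBpos : 0 < B := Finset.prod_pos fun j _ => abs_pos.mpr (hw0 j)
  rw [frequently_atTop]
  intro N
  have hε₀ : 0 < ε * A / B * ‖z i₀‖ := by positivity
  obtain ⟨m, hmN, hm⟩ := frequently_atTop.mp (hliminf _ hε₀) (N + i₀.toNat)
  -- set n
  set n : ℕ := ((m : ℤ) - i₀).toNat with hn
  have hmi₀ : i₀ ≤ (m : ℤ) := by
    have : i₀ ≤ (i₀.toNat : ℤ) := Int.self_le_toNat i₀
    omega
  have hncast : (n : ℤ) = (m : ℤ) - i₀ := by
    rw [hn]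
    exact Int.toNat_of_nonneg (by omega)
  have hnN : N ≤ n := by
    have : (N : ℤ) ≤ (n : ℤ) := by
      rw [hncast]
      have : ((N + i₀.toNat : ℕ) : ℤ) ≤ (m : ℤ) := by exact_mod_cast hmN
      push_cast at this
      have h2 : i₀ ≤ (i₀.toNat : ℤ) := Int.self_le_toNat i₀
      omega
    exact_mod_cast this
  refine ⟨n, hnN, ?_⟩
  -- coordinate bound
  set D := ∏ j ∈ Finset.Ioc (i₀ - (m : ℤ)) i₀, |w j| with hD
  have hDpos : 0 < D := Finset.prod_pos fun j _ => abs_pos.mpr (hw0 j)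
  have hcoordeq : ‖((T ^ m) z) (i₀ - (m : ℤ))‖ = D * ‖z i₀‖ := by
    rw [coords w T hT m z (i₀ - (m : ℤ))]
    have he : i₀ - (m : ℤ) + (m : ℤ) = i₀ := by ring
    rw [he, Real.norm_eq_abs, Real.norm_eq_abs, abs_mul, Finset.abs_prod, hD]
  have hbound : D * ‖z i₀‖ ≤ ‖(T ^ m) z‖ := by
    rw [← hcoordeq]
    exact lp.norm_apply_le_norm one_ne_zero _ _
  have hDlt : D < ε * A / B := by
    have h1 : D * ‖z i₀‖ < ε * A / B * ‖z i₀‖ := lt_of_le_of_lt hbound hm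
    exact lt_of_mul_lt_mul_right h1 (le_of_lt hzi₀)
  -- key identity
  have hkey : (∏ j ∈ Finset.Ioc (i₀ - (m : ℤ)) 0, |w j|) * A = D * B := by
    rcases le_total i₀ 0 with h0 | h0
    · have hAe : A = 1 := by
        rw [hA, Finset.Ioc_eq_empty (by omega), Finset.prod_empty]
      rw [hAe, mul_one, hD, hB, prod_Ioc_glue (fun j => |w j|) (by omega) h0]
    · have hBe : B = 1 := by
        rw [hB, Finset.Ioc_eq_empty (by omega), Finset.prod_empty]
      rw [hBe, mul_one, hD, ← prod_Ioc_glue (fun j => |w j|) (by omega : i₀ - (m : ℤ) ≤ 0) h0]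
  have hIcc : Finset.Icc (-(n : ℤ) + 1) 0 = Finset.Ioc (i₀ - (m : ℤ)) 0 := by
    rw [Icc_eq_Ioc_int]
    congr 1
    omega
  rw [hIcc]
  have hP : (∏ j ∈ Finset.Ioc (i₀ - (m : ℤ)) 0, |w j|) = D * B / A := by
    field_simp
    linarith [hkey]
  rw [hP]
  rw [div_lt_iff₀ hApos]
  calc D * B < (ε * A / B) * B := by
        apply mul_lt_mul_of_pos_right hDlt hBpos
    _ = ε * A := by field_simp
end

section
/- Let w = {w_j}_{j∈ℤ} be a bounded sequence of non-zero scalars. If liminf_{n→∞} ∏_{j=−n+1}^{0} |w_j| = 0, then there exists a single sequence {p_n} in ℕ such that for every k ∈ ℤ, lim_{n→∞} ∏_{j=−p_n+k+1}^{k} |w_j| = 0. -/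
open Filter Topology

theorem stmt17
    (w : ℤ → ℝ) (hwbd : ∃ C : ℝ, ∀ j, |w j| ≤ C) (hw0 : ∀ j, w j ≠ 0)
    (hliminf : ∀ ε > 0, ∃ᶠ n : ℕ in atTop,
      ∏ j ∈ Finset.Icc (-(n : ℤ) + 1) 0, |w j| < ε) :
    ∃ p : ℕ → ℕ, ∀ k : ℤ,
      Tendsto (fun n => ∏ j ∈ Finset.Icc (k - (p n : ℤ) + 1) k, |w j|)
        atTop (𝓝 0) := by
  obtain ⟨C, hC⟩ := hwbd
  set M : ℝ := max C 1 with hMdef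
  have hM1 : (1:ℝ) ≤ M := le_max_right _ _
  have hM0 : (0:ℝ) < M := one_pos.trans_le hM1
  have hwM : ∀ j, |w j| ≤ M := fun j => (hC j).trans (le_max_left _ _)
  have hwpos : ∀ j, 0 < |w j| := fun j => abs_pos.mpr (hw0 j)
  have hIoc : ∀ a b : ℤ, Finset.Icc (a + 1) b = Finset.Ioc a b := by
    intro a b; ext x; simp only [Finset.mem_Icc, Finset.mem_Ioc]; omega
  have hprodpos : ∀ a b : ℤ, 0 < ∏ j ∈ Finset.Ioc a b, |w j| :=
    fun a b => Finset.prod_pos fun j _ => hwpos j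
  have hprodM : ∀ a b : ℤ, ∏ j ∈ Finset.Ioc a b, |w j| ≤ M ^ (b - a).toNat := by
    intro a b
    calc ∏ j ∈ Finset.Ioc a b, |w j| ≤ ∏ _j ∈ Finset.Ioc a b, M :=
          Finset.prod_le_prod (fun j _ => (hwpos j).le) (fun j _ => hwM j)
      _ = M ^ (b - a).toNat := by rw [Finset.prod_const, Int.card_Ioc]
  have hsplit : ∀ a b c : ℤ, a ≤ b → b ≤ c →
      (∏ j ∈ Finset.Ioc a b, |w j|) * ∏ j ∈ Finset.Ioc b c, |w j|
        = ∏ j ∈ Finset.Ioc a c, |w j| :=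
    fun a b c h1 h2 => by
      rw [← Finset.Ioc_union_Ioc_eq_Ioc h1 h2, Finset.prod_union]
      rw [Finset.disjoint_left]
      intro x hx hx2
      simp only [Finset.mem_Ioc] at hx hx2
      omega
  have hq : ∀ n : ℕ, ∃ m : ℕ, n ≤ m ∧
      ∏ j ∈ Finset.Ioc (-(m : ℤ)) 0, |w j| < (1/((n:ℝ)+1)) * (M ^ (2*n))⁻¹ := by
    intro n
    have hε : 0 < (1/((n:ℝ)+1)) * (M ^ (2*n))⁻¹ := by positivity
    obtain ⟨m, h1, h2⟩ := ((hliminf _ hε).and_eventually (eventually_ge_atTop n)).exists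
    refine ⟨m, h2, ?_⟩
    rwa [hIoc] at h1
  choose q hqge hqlt using hq
  refine ⟨fun n => q n + n, fun k => ?_⟩
  simp only [hIoc (k - _)]
  rcases le_or_gt 0 k with hk | hk
  · -- k ≥ 0
    apply squeeze_zero' (g := fun n : ℕ => M ^ (2 * k.natAbs) * (1/((n:ℝ)+1)))
    · exact Eventually.of_forall fun n => (hprodpos _ _).le
    · filter_upwards [eventually_ge_atTop k.natAbs] with n hn
      have hkn : k ≤ (n : ℤ) := by omega
      have h1 : k - ((q n + n : ℕ) : ℤ) ≤ -(q n : ℤ) := by push_cast; omega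
      have h2 : -(q n : ℤ) ≤ 0 := by omega
      have e1 : (∏ j ∈ Finset.Ioc (k - ((q n + n : ℕ) : ℤ)) 0, |w j|) *
          ∏ j ∈ Finset.Ioc 0 k, |w j|
          = ∏ j ∈ Finset.Ioc (k - ((q n + n : ℕ) : ℤ)) k, |w j| :=
        hsplit _ _ _ (by omega) hk
      have e2 : (∏ j ∈ Finset.Ioc (k - ((q n + n : ℕ) : ℤ)) (-(q n : ℤ)), |w j|) *
          ∏ j ∈ Finset.Ioc (-(q n : ℤ)) 0, |w j|
          = ∏ j ∈ Finset.Ioc (k - ((q n + n : ℕ) : ℤ)) 0, |w j| :=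
        hsplit _ _ _ h1 h2
      have hA : ∏ j ∈ Finset.Ioc (k - ((q n + n : ℕ) : ℤ)) (-(q n : ℤ)), |w j|
          ≤ M ^ n := by
        refine (hprodM _ _).trans (pow_le_pow_right₀ hM1 ?_)
        push_cast; omega
      have hB := hqlt n
      have hCc : ∏ j ∈ Finset.Ioc (0:ℤ) k, |w j| ≤ M ^ k.natAbs := by
        refine (hprodM _ _).trans (pow_le_pow_right₀ hM1 ?_)
        omega
      calc ∏ j ∈ Finset.Ioc (k - ((q n + n : ℕ) : ℤ)) k, |w j|
          = (∏ j ∈ Finset.Ioc (k - ((q n + n : ℕ) : ℤ)) (-(q n : ℤ)), |w j|) *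
            (∏ j ∈ Finset.Ioc (-(q n : ℤ)) 0, |w j|) *
            ∏ j ∈ Finset.Ioc 0 k, |w j| := by rw [e2, e1]
        _ ≤ M ^ n * ((1/((n:ℝ)+1)) * (M ^ (2*n))⁻¹) * M ^ k.natAbs := by
            exact mul_le_mul (mul_le_mul hA hB.le (hprodpos _ _).le (by positivity))
              hCc (hprodpos _ _).le (by positivity)
        _ = (M ^ n / M ^ (2*n)) * (M ^ k.natAbs * (1/((n:ℝ)+1))) := by ring
        _ ≤ 1 * (M ^ (2 * k.natAbs) * (1/((n:ℝ)+1))) := by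
            have h3 : (0:ℝ) < M ^ (2*n) := by positivity
            have h4 : M ^ n ≤ M ^ (2*n) := pow_le_pow_right₀ hM1 (by omega)
            have h5 : M ^ k.natAbs ≤ M ^ (2 * k.natAbs) :=
              pow_le_pow_right₀ hM1 (by omega)
            have h6 : (0:ℝ) ≤ 1/((n:ℝ)+1) := by positivity
            exact mul_le_mul ((div_le_one h3).mpr h4)
              (by gcongr) (by positivity) one_pos.le
        _ = M ^ (2 * k.natAbs) * (1/((n:ℝ)+1)) := one_mul _
    · have := tendsto_one_div_add_atTop_nhds_zero_nat.const_mul (M ^ (2 * k.natAbs))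
      simpa using this
  · -- k < 0
    set B : ℝ := ∏ j ∈ Finset.Ioc k 0, |w j| with hBdef
    have hBpos : 0 < B := hprodpos k 0
    apply squeeze_zero' (g := fun n : ℕ => (M ^ k.natAbs / B) * (1/((n:ℝ)+1)))
    · exact Eventually.of_forall fun n => (hprodpos _ _).le
    · filter_upwards [eventually_ge_atTop 0] with n _
      have h1 : k - ((q n + n : ℕ) : ℤ) ≤ -(q n : ℤ) := by push_cast; omega
      have h2 : -(q n : ℤ) ≤ 0 := by omega
      have e1 : (∏ j ∈ Finset.Ioc (k - ((q n + n : ℕ) : ℤ)) k, |w j|) * B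
          = ∏ j ∈ Finset.Ioc (k - ((q n + n : ℕ) : ℤ)) 0, |w j| :=
        hsplit _ _ _ (by push_cast; omega) hk.le
      have e2 : (∏ j ∈ Finset.Ioc (k - ((q n + n : ℕ) : ℤ)) (-(q n : ℤ)), |w j|) *
          ∏ j ∈ Finset.Ioc (-(q n : ℤ)) 0, |w j|
          = ∏ j ∈ Finset.Ioc (k - ((q n + n : ℕ) : ℤ)) 0, |w j| :=
        hsplit _ _ _ h1 h2
      have hA : ∏ j ∈ Finset.Ioc (k - ((q n + n : ℕ) : ℤ)) (-(q n : ℤ)), |w j|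
          ≤ M ^ (n + k.natAbs) := by
        refine (hprodM _ _).trans (pow_le_pow_right₀ hM1 ?_)
        push_cast; omega
      have hB' := hqlt n
      have key : ∏ j ∈ Finset.Ioc (k - ((q n + n : ℕ) : ℤ)) 0, |w j|
          ≤ M ^ (n + k.natAbs) * ((1/((n:ℝ)+1)) * (M ^ (2*n))⁻¹) := by
        rw [← e2]
        exact mul_le_mul hA hB'.le (hprodpos _ _).le (by positivity)
      rw [← e1] at key
      have step : ∏ j ∈ Finset.Ioc (k - ((q n + n : ℕ) : ℤ)) k, |w j|
          ≤ M ^ (n + k.natAbs) * ((1/((n:ℝ)+1)) * (M ^ (2*n))⁻¹) / B :=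
        (le_div_iff₀ hBpos).mpr key
      refine step.trans ?_
      have h3 : (0:ℝ) < M ^ (2*n) := by positivity
      have h4 : M ^ (n + k.natAbs) ≤ M ^ (2*n) * M ^ k.natAbs := by
        rw [← pow_add]
        exact pow_le_pow_right₀ hM1 (by omega)
      rw [div_le_iff₀ hBpos]
      calc M ^ (n + k.natAbs) * ((1/((n:ℝ)+1)) * (M ^ (2*n))⁻¹)
          = M ^ (n + k.natAbs) / M ^ (2*n) * (1/((n:ℝ)+1)) := by ring
        _ ≤ M ^ k.natAbs * (1/((n:ℝ)+1)) := by
            have : M ^ (n + k.natAbs) / M ^ (2*n) ≤ M ^ k.natAbs := by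
              rw [div_le_iff₀ h3]
              calc M ^ (n + k.natAbs) ≤ M ^ (2*n) * M ^ k.natAbs := h4
                _ = M ^ k.natAbs * M ^ (2*n) := by ring
            have h7 : (0:ℝ) ≤ 1/((n:ℝ)+1) := by positivity
            exact mul_le_mul_of_nonneg_right this h7
        _ = M ^ k.natAbs / B * (1/((n:ℝ)+1)) * B := by field_simp
    · have := tendsto_one_div_add_atTop_nhds_zero_nat.const_mul (M ^ k.natAbs / B)
      simpa using this
end

section
/- Let X be a Banach space and T: X → X a bounded linear operator. Suppose S ⊆ X is uniformly Li–Yorke scrambled for T and S is locally residual (there exists a nonempty open U ⊆ X such that S ∩ U is residual in U). Then the whole space X is uniformly Li–Yorke scrambled: there exist sequences {p_n}, {q_n} in ℕ such that for every non-zero x ∈ X, ‖T^{p_n} x‖ → 0 and ‖T^{q_n} x‖ → ∞. -/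
open Filter Topology

private lemma isGdelta_preimage {X Y : Type*} [TopologicalSpace X] [TopologicalSpace Y]
    {f : X → Y} (hf : Continuous f) {s : Set Y} (hs : IsGδ s) : IsGδ (f ⁻¹' s) := by
  obtain ⟨T, hTo, hTc, rfl⟩ := hs
  rw [Set.preimage_sInter]
  exact IsGδ.biInter hTc fun t ht => ((hTo t ht).preimage hf).isGδ

theorem stmt18 {X : Type*} [NormedAddCommGroup X] [NormedSpace ℝ X] [CompleteSpace X]
    (T : X →L[ℝ] X) (S : Set X)
    (hscr : ∃ p q : ℕ → ℕ, ∀ x ∈ S, ∀ y ∈ S, x ≠ y →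
      Tendsto (fun n => ‖(T ^ p n) (x - y)‖) atTop (𝓝 0) ∧
      Tendsto (fun n => ‖(T ^ q n) (x - y)‖) atTop atTop)
    (hres : ∃ U : Set X, IsOpen U ∧ U.Nonempty ∧
      ∃ G : Set X, G ⊆ S ∩ U ∧ IsGδ G ∧ U ⊆ closure G) :
    ∃ p q : ℕ → ℕ, ∀ x : X, x ≠ 0 →
      Tendsto (fun n => ‖(T ^ p n) x‖) atTop (𝓝 0) ∧
      Tendsto (fun n => ‖(T ^ q n) x‖) atTop atTop := by
  obtain ⟨p, q, hpq⟩ := hscr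
  obtain ⟨U, hUopen, ⟨u, hu⟩, G, hGS, hGδ, hGdense⟩ := hres
  refine ⟨p, q, fun x hx => ?_⟩
  obtain ⟨ε, hε, hball⟩ := Metric.isOpen_iff.1 hUopen u hu
  have hxpos : 0 < ‖x‖ := norm_pos_iff.2 hx
  set c : ℝ := ε / (3 * ‖x‖) with hc
  have hcpos : 0 < c := div_pos hε (by positivity)
  set v : X := c • x with hv
  have hvnorm : ‖v‖ < ε / 2 := by
    have h1 : ‖v‖ = c * ‖x‖ := by rw [hv, norm_smul, Real.norm_eq_abs, abs_of_pos hcpos]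
    have h2 : c * ‖x‖ = ε / 3 := by rw [hc]; field_simp
    rw [h1, h2]; linarith
  set W : Set X := Metric.ball u (ε / 2) with hW
  have hWU : W ⊆ U := fun z hz => hball (by
    have : dist z u < ε / 2 := hz
    exact Metric.mem_ball.2 (by linarith))
  have hWvU : ∀ z ∈ W, z - v ∈ U := by
    intro z hz
    apply hball
    have h1 : dist z u < ε / 2 := hz
    have : dist (z - v) u ≤ dist (z - v) z + dist z u := dist_triangle _ _ _
    have h2 : dist (z - v) z = ‖v‖ := by
      rw [dist_eq_norm]; simp
    exact Metric.mem_ball.2 (by rw [h2] at this; linarith)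
  have hWc : IsGδ (Wᶜ : Set X) := (Metric.isOpen_ball.isClosed_compl).isGδ
  have hA : Dense (G ∪ Wᶜ) := by
    intro z
    by_cases hz : z ∈ W
    · exact closure_mono Set.subset_union_left (hGdense (hWU hz))
    · exact subset_closure (Or.inr hz)
  set B : Set X := (fun a => a - v) ⁻¹' G with hB
  have hBδ : IsGδ B := isGdelta_preimage (continuous_id.sub continuous_const) hGδ
  have hBdense : Dense (B ∪ Wᶜ) := by
    intro z
    by_cases hz : z ∈ W
    · have h1 : z - v ∈ closure G := hGdense (hWvU z hz)
      have h2 : z ∈ closure B := by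
        have heq := (Homeomorph.subRight v).preimage_closure (s := G)
        have h3 : z ∈ (⇑(Homeomorph.subRight v)) ⁻¹' closure G := h1
        rw [heq] at h3
        exact h3
      exact closure_mono Set.subset_union_left h2
    · exact subset_closure (Or.inr hz)
  have hD : Dense ((G ∪ Wᶜ) ∩ (B ∪ Wᶜ)) :=
    hA.inter_of_Gδ (hGδ.union hWc) (hBδ.union hWc) hBdense
  obtain ⟨a, haD, haW⟩ := hD.exists_mem_open Metric.isOpen_ball
    ⟨u, Metric.mem_ball_self (half_pos hε)⟩
  have haG : a ∈ G := haD.1.resolve_right (fun h => h haW)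
  have haG' : a - v ∈ G := haD.2.resolve_right (fun h => h haW)
  have hvne : v ≠ 0 := smul_ne_zero (ne_of_gt hcpos) hx
  have hane : a ≠ a - v := by
    intro h
    apply hvne
    have : a - (a - v) = 0 := by rw [← h]; simp
    simpa using this
  obtain ⟨h0, hinf⟩ := hpq a (hGS haG).1 (a - v) (hGS haG').1 hane
  have hsub : a - (a - v) = v := by abel
  rw [hsub] at h0 hinf
  have heq : ∀ f : ℕ → ℕ, (fun n => ‖(T ^ f n) v‖) = fun n => c * ‖(T ^ f n) x‖ := by
    intro f
    funext n
    rw [hv, map_smul, norm_smul, Real.norm_eq_abs, abs_of_pos hcpos]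
  rw [heq p] at h0
  rw [heq q] at hinf
  constructor
  · have := h0.const_mul c⁻¹
    simp only [mul_zero] at this
    convert this using 2 with n
    field_simp
  · have := hinf.const_mul_atTop (inv_pos.2 hcpos)
    convert this using 2 with n
    field_simp
end

section
/- Let (X,d) be a metric space, f: X → X a Lipschitz continuous map, and k ∈ ℕ. If a set S ⊆ X is uniformly Li–Yorke scrambled for f, then S is uniformly Li–Yorke scrambled for f^k (the k-th iterate). -/
/-!
If `f` is `K`-Lipschitz with `K ≥ 1`, then `r` further iterations stretch distances by at most
`K ^ r`. Rounding the times `p n` up and `q n` down to multiples of `k` moves them by at most `k`,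
so along the rounded times the distances still tend to `0`, resp. `∞`, up to the fixed factor
`K ^ k`.
-/

open Filter Topology

namespace LipschitzWith

variable {X : Type*} [PseudoMetricSpace X] {f : X → X} {K : NNReal}

theorem dist_iterate_le_pow_mul (hf : LipschitzWith K f) (hK : 1 ≤ K) {a b r : ℕ}
    (hab : a ≤ b) (hbr : b ≤ a + r) (x y : X) :
    dist (f^[b] x) (f^[b] y) ≤ (K : ℝ) ^ r * dist (f^[a] x) (f^[a] y) := by
  obtain ⟨c, rfl⟩ := Nat.exists_eq_add_of_le hab
  rw [add_comm a c, Function.iterate_add_apply, Function.iterate_add_apply]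
  calc dist (f^[c] (f^[a] x)) (f^[c] (f^[a] y))
      ≤ (K : ℝ) ^ c * dist (f^[a] x) (f^[a] y) := by
        simpa using (hf.iterate c).dist_le_mul (f^[a] x) (f^[a] y)
    _ ≤ (K : ℝ) ^ r * dist (f^[a] x) (f^[a] y) := by
        gcongr
        omega

variable {k : ℕ} {x y : X} {p : ℕ → ℕ}

theorem tendsto_dist_iterate_mul_div_succ (hf : LipschitzWith K f) (hK : 1 ≤ K) (hk : 0 < k)
    (h : Tendsto (fun n => dist (f^[p n] x) (f^[p n] y)) atTop (𝓝 0)) :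
    Tendsto (fun n => dist (f^[k * (p n / k + 1)] x) (f^[k * (p n / k + 1)] y))
      atTop (𝓝 0) := by
  have hle : ∀ n, dist (f^[k * (p n / k + 1)] x) (f^[k * (p n / k + 1)] y)
      ≤ (K : ℝ) ^ k * dist (f^[p n] x) (f^[p n] y) := fun n => by
    have := Nat.mul_div_le (p n) k
    exact hf.dist_iterate_le_pow_mul hK (Nat.lt_mul_div_succ (p n) hk).le (by rw [mul_add]; omega)
      x y
  exact squeeze_zero (fun _ => dist_nonneg) hle (by simpa using h.const_mul ((K : ℝ) ^ k))

theorem tendsto_dist_iterate_mul_div (hf : LipschitzWith K f) (hK : 1 ≤ K) (hk : 0 < k)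
    (h : Tendsto (fun n => dist (f^[p n] x) (f^[p n] y)) atTop atTop) :
    Tendsto (fun n => dist (f^[k * (p n / k)] x) (f^[k * (p n / k)] y)) atTop atTop := by
  have hKk : (0 : ℝ) < (K : ℝ) ^ k := pow_pos (by exact_mod_cast one_pos.trans_le hK) k
  refine tendsto_atTop_mono (fun n => ?_) (h.atTop_div_const hKk)
  have := Nat.lt_mul_div_succ (p n) hk
  rw [div_le_iff₀' hKk]
  exact hf.dist_iterate_le_pow_mul hK (Nat.mul_div_le (p n) k) (by rw [mul_add] at this; omega)
    x y

end LipschitzWith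

theorem stmt19 {X : Type*} [MetricSpace X] (f : X → X)
    (L : ℝ) (hL : ∀ x y : X, dist (f x) (f y) ≤ L * dist x y)
    (k : ℕ) (hk : 1 ≤ k) (S : Set X)
    (hscr : ∃ p q : ℕ → ℕ, ∀ x ∈ S, ∀ y ∈ S, x ≠ y →
      Tendsto (fun n => dist (f^[p n] x) (f^[p n] y)) atTop (𝓝 0) ∧
      Tendsto (fun n => dist (f^[q n] x) (f^[q n] y)) atTop atTop) :
    ∃ p q : ℕ → ℕ, ∀ x ∈ S, ∀ y ∈ S, x ≠ y →
      Tendsto (fun n => dist ((f^[k])^[p n] x) ((f^[k])^[p n] y)) atTop (𝓝 0) ∧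
      Tendsto (fun n => dist ((f^[k])^[q n] x) ((f^[k])^[q n] y)) atTop atTop := by
  obtain ⟨p, q, hpq⟩ := hscr
  have hf : LipschitzWith (L.toNNReal ⊔ 1) f :=
    (LipschitzWith.of_dist_le_mul fun x y =>
      (hL x y).trans (by gcongr; exact L.le_coe_toNNReal)).weaken le_sup_left
  refine ⟨fun n => p n / k + 1, fun n => q n / k, fun x hx y hy hxy => ?_⟩
  obtain ⟨hp, hq⟩ := hpq x hx y hy hxy
  simp only [← Function.iterate_mul]
  exact ⟨hf.tendsto_dist_iterate_mul_div_succ le_sup_right hk hp,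
    hf.tendsto_dist_iterate_mul_div le_sup_right hk hq⟩
end
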